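/- arXiv:1210.3795 — 11 statements merged into one kernel-verified Lean document; each statement's English description precedes it below -/
import Mathlib

section
/- Let d ≥ 2, δ > 0 and α > 0. If ξ : [0,∞) → ℝ^{2d} is differentiable with ξ′(t) = F(ξ(t)) for all t ≥ 0 and ξ(0) ∈ D, then ξ(t) ∈ D for all t ≥ 0; that is, D is positively invariant under the dynamics of the vector field F. -/
open Finset

/-- The closed simplex `Δ = {u : u_i ≥ 0, ∑ u_i = 1}`. -/
def simplexSet (d : ℕ) : Set (Fin d → ℝ) :=
  {u | (∀ i, 0 ≤ u i) ∧ ∑ i, u i = 1}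

/-- `D = Δ × Δ`. -/
def Dset (d : ℕ) : Set ((Fin d → ℝ) × (Fin d → ℝ)) :=
  {z | z.1 ∈ simplexSet d ∧ z.2 ∈ simplexSet d}

/-- `π_i(x) = f_δ(x_i)^{−α} / ∑_k f_δ(x_k)^{−α}` with `f_δ(x) = max(δ, x)`. -/
noncomputable def piv (d : ℕ) (δ α : ℝ) (x : Fin d → ℝ) (i : Fin d) : ℝ :=
  (max δ (x i)) ^ (-α) / ∑ k, (max δ (x k)) ^ (-α)

/-- The vector field `F(u,v) = (−u + π(v), −v + π(u))`. -/
noncomputable def Fvec (d : ℕ) (δ α : ℝ) (z : (Fin d → ℝ) × (Fin d → ℝ)) :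
    (Fin d → ℝ) × (Fin d → ℝ) :=
  (-z.1 + piv d δ α z.2, -z.2 + piv d δ α z.1)

/-! Each half of `ξ` solves `u' = -u + p(t)` with `p(t) = π(·) ∈ Δ`. Then `(eᵗ uᵢ)' = eᵗ pᵢ ≥ 0`
keeps every coordinate nonnegative, and `s = ∑ uᵢ` satisfies `(s - 1)' = -(s - 1)`, so `s ≡ 1`. -/

open Real Set

section Relaxation

variable {y q : ℝ → ℝ}

-- The integrating factor `eᵗ` turns `y' = -y + q` into `(eᵗ y)' = eᵗ q`.
lemma monotoneOn_exp_mul_of_hasDerivAt (hy : ∀ t ≥ (0 : ℝ), HasDerivAt y (-y t + q t) t)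
    (hq : ∀ t ≥ (0 : ℝ), 0 ≤ q t) : MonotoneOn (fun t => exp t * y t) (Ici 0) := by
  have hderiv : ∀ t ≥ (0 : ℝ), HasDerivAt (fun s => exp s * y s) (exp t * q t) t := fun t ht =>
    ((hasDerivAt_exp t).mul (hy t ht)).congr_deriv (by ring)
  refine monotoneOn_of_hasDerivWithinAt_nonneg (convex_Ici 0)
    (fun t ht => (hderiv t ht).continuousAt.continuousWithinAt)
    (fun t ht => (hderiv t (interior_subset ht)).hasDerivWithinAt)
    (fun t ht => mul_nonneg (exp_pos t).le (hq t (interior_subset ht)))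

lemma nonneg_of_hasDerivAt_neg_add (hy : ∀ t ≥ (0 : ℝ), HasDerivAt y (-y t + q t) t)
    (hq : ∀ t ≥ (0 : ℝ), 0 ≤ q t) (h0 : 0 ≤ y 0) : ∀ t ≥ (0 : ℝ), 0 ≤ y t := by
  intro t ht
  have hmono : exp 0 * y 0 ≤ exp t * y t :=
    monotoneOn_exp_mul_of_hasDerivAt hy hq self_mem_Ici ht ht
  rw [exp_zero, one_mul] at hmono
  exact nonneg_of_mul_nonneg_right (h0.trans hmono) (exp_pos t)

lemma eq_zero_of_hasDerivAt_neg (hy : ∀ t ≥ (0 : ℝ), HasDerivAt y (-y t) t) (h0 : y 0 = 0) :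
    ∀ t ≥ (0 : ℝ), y t = 0 := by
  have hpos := nonneg_of_hasDerivAt_neg_add (q := 0) (by simpa using hy) (fun _ _ => le_rfl) h0.ge
  have hneg := nonneg_of_hasDerivAt_neg_add (y := fun t => -y t) (q := 0)
    (fun t ht => (hy t ht).fun_neg.congr_deriv (by simp)) (fun _ _ => le_rfl) (by simp [h0])
  exact fun t ht => le_antisymm (by simpa using hneg t ht) (hpos t ht)

end Relaxation

theorem mem_simplexSet_of_hasDerivAt {d : ℕ} {u p : ℝ → Fin d → ℝ}
    (hu : ∀ t ≥ (0 : ℝ), HasDerivAt u (-u t + p t) t)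
    (hp : ∀ t ≥ (0 : ℝ), p t ∈ simplexSet d) (h0 : u 0 ∈ simplexSet d) :
    ∀ t ≥ (0 : ℝ), u t ∈ simplexSet d := by
  have hcoord : ∀ i, ∀ t ≥ (0 : ℝ), HasDerivAt (fun s => u s i) (-u t i + p t i) t :=
    fun i t ht => by simpa using hasDerivAt_pi.1 (hu t ht) i
  have hsum : ∀ t ≥ (0 : ℝ), HasDerivAt (fun s => ∑ i, u s i - 1) (-(∑ i, u t i - 1)) t := by
    intro t ht
    refine ((HasDerivAt.fun_sum fun i _ => hcoord i t ht).sub_const 1).congr_deriv ?_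
    rw [Finset.sum_add_distrib, Finset.sum_neg_distrib, (hp t ht).2]
    ring
  intro t ht
  exact ⟨fun i => nonneg_of_hasDerivAt_neg_add (hcoord i) (fun s hs => (hp s hs).1 i) (h0.1 i) t ht,
    sub_eq_zero.1 (eq_zero_of_hasDerivAt_neg hsum (sub_eq_zero.2 h0.2) t ht)⟩

lemma piv_mem_simplexSet {d : ℕ} (hd : 0 < d) {δ : ℝ} (hδ : 0 < δ) (α : ℝ) (x : Fin d → ℝ) :
    piv d δ α x ∈ simplexSet d := by
  have : Nonempty (Fin d) := ⟨⟨0, hd⟩⟩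
  have hterm : ∀ k, 0 < max δ (x k) ^ (-α) := fun k =>
    rpow_pos_of_pos (hδ.trans_le (le_max_left _ _)) _
  have htotal : 0 < ∑ k, max δ (x k) ^ (-α) :=
    Finset.sum_pos (fun k _ => hterm k) Finset.univ_nonempty
  refine ⟨fun i => (div_pos (hterm i) htotal).le, ?_⟩
  simp only [piv, ← Finset.sum_div, div_self htotal.ne']

theorem stmt_1_general (d : ℕ) (hd : 2 ≤ d) (δ α : ℝ) (hδ : 0 < δ)
    (ξ : ℝ → (Fin d → ℝ) × (Fin d → ℝ))
    (hξ : ∀ t ≥ (0 : ℝ), HasDerivAt ξ (Fvec d δ α (ξ t)) t)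
    (h0 : ξ 0 ∈ Dset d) :
    ∀ t ≥ (0 : ℝ), ξ t ∈ Dset d := by
  have hπ : ∀ x, piv d δ α x ∈ simplexSet d := piv_mem_simplexSet (by omega) hδ α
  have hu : ∀ t ≥ (0 : ℝ), HasDerivAt (fun s => (ξ s).1) (-(ξ t).1 + piv d δ α (ξ t).2) t :=
    fun t ht => (ContinuousLinearMap.fst ℝ (Fin d → ℝ) (Fin d → ℝ)).hasFDerivAt.comp_hasDerivAt t
      (hξ t ht)
  have hv : ∀ t ≥ (0 : ℝ), HasDerivAt (fun s => (ξ s).2) (-(ξ t).2 + piv d δ α (ξ t).1) t :=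
    fun t ht => (ContinuousLinearMap.snd ℝ (Fin d → ℝ) (Fin d → ℝ)).hasFDerivAt.comp_hasDerivAt t
      (hξ t ht)
  exact fun t ht => ⟨mem_simplexSet_of_hasDerivAt hu (fun _ _ => hπ _) h0.1 t ht,
    mem_simplexSet_of_hasDerivAt hv (fun _ _ => hπ _) h0.2 t ht⟩

/-- Proposition 10: `D` is positively invariant under the dynamics of `F`:
any solution `ξ` of `ξ′ = F(ξ)` on `[0,∞)` starting in `D` stays in `D`. -/
theorem stmt_1 (d : ℕ) (hd : 2 ≤ d) (δ α : ℝ) (hδ : 0 < δ) (hα : 0 < α)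
    (ξ : ℝ → (Fin d → ℝ) × (Fin d → ℝ))
    (hξ : ∀ t ≥ (0 : ℝ), HasDerivAt ξ (Fvec d δ α (ξ t)) t)
    (h0 : ξ 0 ∈ Dset d) :
    ∀ t ≥ (0 : ℝ), ξ t ∈ Dset d :=
  stmt_1_general d hd δ α hδ ξ hξ h0
end

section
/- Let d ≥ 2 be an integer and α > 0. Let B be the d×d real matrix with entries B_{ij} = α/d − α·1_{i=j}, and let J be the 2d×2d block matrix J = [[−I_d, B],[B, −I_d]]. Then the characteristic polynomial of J is (λ+1)² (λ+1−α)^{d−1} (λ+1+α)^{d−1}; in particular the eigenvalues of J are exactly −1, −1+α and −1−α. -/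
/-!
Conjugating `[[A, B], [B, A]]` by the block unitriangular matrices `[[1, 1], [0, 1]]` and
`[[1, -1], [0, 1]]` makes it block triangular with diagonal blocks `A + B` and `A - B`, so
`χ_J = χ_{B - 1} · χ_{-B - 1}`. Both factors are rank-one matrices `u vᵀ` shifted by a scalar,
with `B = (α/d) 𝟙𝟙ᵀ - α I`, and `χ_{u vᵀ} = X^{d-1} (X - u ⬝ v)`.
-/

open Matrix Polynomial

namespace Matrix

variable {R : Type*} [CommRing R] {n : Type*} [Fintype n] [DecidableEq n]

theorem det_fromBlocks_self_swap (A B : Matrix n n R) :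
    (fromBlocks A B B A).det = (A + B).det * (A - B).det := by
  have h : fromBlocks 1 1 0 1 * fromBlocks A B B A * fromBlocks 1 (-1) 0 1 =
      fromBlocks (A + B) 0 B (A - B) := by
    simp only [fromBlocks_multiply]
    congr 1 <;> simp <;> abel
  simpa [det_fromBlocks_zero₂₁, det_fromBlocks_zero₁₂] using congrArg det h

theorem charpoly_fromBlocks_self_swap (A B : Matrix n n R) :
    (fromBlocks A B B A).charpoly = (A + B).charpoly * (A - B).charpoly := by
  rw [charpoly, charmatrix_fromBlocks, det_fromBlocks_self_swap]
  simp only [charpoly, charmatrix, RingHom.mapMatrix_apply,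
    Matrix.map_add _ (map_add C), Matrix.map_sub _ (map_sub C)]
  congr 2 <;> abel

theorem charpoly_vecMulVec_sub_scalar [Nonempty n] (u v : n → R) (μ : R) :
    (vecMulVec u v - scalar n μ).charpoly =
      (X + C μ) ^ (Fintype.card n - 1) * (X + C μ - C (u ⬝ᵥ v)) := by
  have hcard : Fintype.card n - 1 + 1 = Fintype.card n := Nat.sub_add_cancel Fintype.card_pos
  rw [charpoly_sub_scalar, charpoly_vecMulVec, ← hcard, pow_succ, Nat.add_sub_cancel,
    smul_eq_C_mul]
  simp only [sub_comp, mul_comp, pow_comp, X_comp, C_comp]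
  ring

end Matrix

theorem stmt_2_general (d : ℕ) (hd : 2 ≤ d) (α : ℝ)
    (B : Matrix (Fin d) (Fin d) ℝ)
    (hB : ∀ i j, B i j = α / d - if i = j then α else 0)
    (J : Matrix (Fin d ⊕ Fin d) (Fin d ⊕ Fin d) ℝ)
    (hJ : J = Matrix.fromBlocks (-1) B B (-1)) :
    J.charpoly = (X + C 1) ^ 2 * (X + C (1 - α)) ^ (d - 1) * (X + C (1 + α)) ^ (d - 1) ∧
      spectrum ℝ J = {-1, -1 + α, -1 - α} := by
  have : Nonempty (Fin d) := ⟨⟨0, by omega⟩⟩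
  have hdot (c : ℝ) : (fun _ : Fin d => c / d) ⬝ᵥ 1 = c := by
    rw [dotProduct_one, Finset.sum_const, Finset.card_univ, Fintype.card_fin, nsmul_eq_mul,
      mul_div_cancel₀ _ (by positivity)]
  have hplus : -1 + B = vecMulVec (fun _ => α / d) 1 - scalar (Fin d) (1 + α) := by
    ext i j; by_cases h : i = j <;> simp [hB, h]; ring
  have hminus : -1 - B = vecMulVec (fun _ => -α / d) 1 - scalar (Fin d) (1 - α) := by
    ext i j; by_cases h : i = j <;> simp [hB, h, neg_div]; ring
  have hchar : J.charpoly =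
      (X + C 1) ^ 2 * (X + C (1 - α)) ^ (d - 1) * (X + C (1 + α)) ^ (d - 1) := by
    rw [hJ, charpoly_fromBlocks_self_swap, hplus, hminus, charpoly_vecMulVec_sub_scalar,
      charpoly_vecMulVec_sub_scalar, hdot, hdot, Fintype.card_fin]
    simp only [map_add, map_sub, map_neg]
    ring
  refine ⟨hchar, Set.ext fun μ => ?_⟩
  have hd1 : d - 1 ≠ 0 := by omega
  rw [mem_spectrum_iff_isRoot_charpoly, hchar]
  simp only [IsRoot.def, eval_mul, eval_pow, eval_add, eval_X, eval_C, mul_eq_zero,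
    pow_eq_zero_iff two_ne_zero, pow_eq_zero_iff hd1, Set.mem_insert_iff, Set.mem_singleton_iff,
    add_eq_zero_iff_eq_neg, neg_sub', neg_add', sub_neg_eq_add, or_assoc]

/-- the Jacobian `J = [[−I, B],[B, −I]]` with `B_{ij} = α/d − α·1_{i=j}`
has characteristic polynomial `(λ+1)² (λ+1−α)^{d−1} (λ+1+α)^{d−1}`, so its eigenvalues
are exactly `−1`, `−1+α` and `−1−α`. -/
theorem stmt_2 (d : ℕ) (hd : 2 ≤ d) (α : ℝ) (hα : 0 < α)
    (B : Matrix (Fin d) (Fin d) ℝ)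
    (hB : ∀ i j, B i j = α / d - if i = j then α else 0)
    (J : Matrix (Fin d ⊕ Fin d) (Fin d ⊕ Fin d) ℝ)
    (hJ : J = Matrix.fromBlocks (-1) B B (-1)) :
    J.charpoly = (X + C 1) ^ 2 * (X + C (1 - α)) ^ (d - 1) * (X + C (1 + α)) ^ (d - 1) ∧
      spectrum ℝ J = {-1, -1 + α, -1 - α} :=
  stmt_2_general d hd α B hB J hJ
end

section
/- Let d ≥ 2 be an integer and α > 0. Let B be the d×d real matrix with entries B_{ij} = α/d − α·1_{i=j}, and let J be the 2d×2d block matrix J = [[−I_d, B],[B, −I_d]]. If α > 1 then α − 1 > 0 is an eigenvalue of J (so (U,U) is a linearly unstable critical point); if 0 < α < 1 then every complex eigenvalue of J has strictly negative real part (so (U,U) is an attracting point). -/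
/-!
Write `B = (α/d) 𝟙𝟙ᵀ - α I`. If `(x, y)` is an eigenvector of `J` for `μ`, then `x + y` and
`x - y` are eigenvectors of `B` for `μ + 1` and `-(μ + 1)`, and they cannot both vanish. The
coordinates of `B w` always sum to zero, so an eigenvector of `B` for a nonzero eigenvalue has
coordinate sum zero, and on such vectors `B` acts as `-α`. Hence `μ ∈ {-1, -1 - α, -1 + α}`.
Conversely, any nonzero `w` with coordinate sum zero gives the eigenvector `(w, -w)` of `J` for
`α - 1`.
-/

open Matrix

theorem Matrix.mem_spectrum_iff_exists_mulVec_eq_smul {K n : Type*} [Field K] [Fintype n]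
    [DecidableEq n] (A : Matrix n n K) (μ : K) :
    μ ∈ spectrum K A ↔ ∃ v, v ≠ 0 ∧ A *ᵥ v = μ • v := by
  rw [← spectrum_toLin', ← Module.End.hasEigenvalue_iff_mem_spectrum,
    Module.End.hasEigenvalue_iff, Submodule.ne_bot_iff]
  simp only [Module.End.mem_eigenspace_iff, toLin'_apply]
  exact ⟨fun ⟨v, hv, h0⟩ => ⟨v, h0, hv⟩, fun ⟨v, h0, hv⟩ => ⟨v, hv, h0⟩⟩

section SymmetricBlocks

variable {K n : Type*} [Field K] [Fintype n] [DecidableEq n]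

theorem fromBlocks_neg_one_mulVec_elim_neg (B : Matrix n n K) {c : K} {w : n → K}
    (hw : B *ᵥ w = c • w) :
    fromBlocks (-1) B B (-1) *ᵥ Sum.elim w (-w) = (-(c + 1)) • Sum.elim w (-w) := by
  rw [fromBlocks_mulVec, Sum.elim_comp_inl, Sum.elim_comp_inr, mulVec_neg, hw, neg_mulVec,
    neg_mulVec, one_mulVec, one_mulVec]
  ext (i | i) <;>
    simp only [Sum.elim_inl, Sum.elim_inr, Pi.add_apply, Pi.neg_apply, Pi.smul_apply,
      smul_eq_mul] <;>
    ring

theorem exists_eigenvector_of_fromBlocks_neg_one [NeZero (2 : K)] (B : Matrix n n K) {μ : K}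
    {v : n ⊕ n → K} (hv : v ≠ 0) (hμ : fromBlocks (-1) B B (-1) *ᵥ v = μ • v) :
    ∃ w, w ≠ 0 ∧ (B *ᵥ w = (μ + 1) • w ∨ B *ᵥ w = (-(μ + 1)) • w) := by
  obtain ⟨x, y, rfl⟩ : ∃ x y, v = Sum.elim x y :=
    ⟨v ∘ Sum.inl, v ∘ Sum.inr, (Sum.elim_comp_inl_inr v).symm⟩
  rw [fromBlocks_mulVec, Sum.elim_comp_inl, Sum.elim_comp_inr, neg_mulVec, neg_mulVec, one_mulVec,
    one_mulVec] at hμ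
  have hxy : B *ᵥ y = (μ + 1) • x := funext fun i => by
    have := congrFun hμ (Sum.inl i)
    simp only [Sum.elim_inl, Pi.add_apply, Pi.neg_apply, Pi.smul_apply, smul_eq_mul] at this ⊢
    linear_combination this
  have hyx : B *ᵥ x = (μ + 1) • y := funext fun i => by
    have := congrFun hμ (Sum.inr i)
    simp only [Sum.elim_inr, Pi.add_apply, Pi.neg_apply, Pi.smul_apply, smul_eq_mul] at this ⊢
    linear_combination this
  by_cases hsum : x + y = 0
  · refine ⟨x - y, fun hdiff => hv ?_, Or.inr ?_⟩
    · have hx : x = 0 := by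
        have : (2 : K) • x = 0 := by
          rw [two_smul, show x + x = (x + y) + (x - y) by abel, hsum, hdiff, add_zero]
        exact (smul_eq_zero.1 this).resolve_left two_ne_zero
      have hy : y = 0 := by simpa [hx] using hsum
      rw [hx, hy, Sum.elim_zero_zero]
    · rw [mulVec_sub, hxy, hyx]; module
  · exact ⟨x + y, hsum, Or.inl (by rw [mulVec_add, hxy, hyx, smul_add, add_comm])⟩

end SymmetricBlocks

section RankOnePerturbation

variable {K : Type*} [Field K] {d : ℕ} {a : K} {B : Matrix (Fin d) (Fin d) K}

theorem mulVec_apply_of_eq_div_sub_ite (hB : ∀ i j, B i j = a / d - if i = j then a else 0)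
    (x : Fin d → K) (i : Fin d) : (B *ᵥ x) i = a / d * ∑ j, x j - a * x i := by
  simp [mulVec, dotProduct, hB, sub_mul, Finset.sum_sub_distrib, ite_mul, Finset.mul_sum]

theorem sum_mulVec_eq_zero_of_eq_div_sub_ite [CharZero K]
    (hB : ∀ i j, B i j = a / d - if i = j then a else 0) (x : Fin d → K) :
    ∑ i, (B *ᵥ x) i = 0 := by
  rcases eq_or_ne d 0 with rfl | hd
  · simp
  simp [mulVec_apply_of_eq_div_sub_ite hB, Finset.sum_sub_distrib, ← Finset.mul_sum]
  field_simp
  ring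

theorem mulVec_eq_neg_smul_of_sum_eq_zero (hB : ∀ i j, B i j = a / d - if i = j then a else 0)
    {x : Fin d → K} (hx : ∑ j, x j = 0) : B *ᵥ x = (-a) • x := by
  ext i; simp [mulVec_apply_of_eq_div_sub_ite hB, hx]

theorem eq_zero_or_eq_neg_of_mulVec_eq_smul [CharZero K]
    (hB : ∀ i j, B i j = a / d - if i = j then a else 0) {c : K} {w : Fin d → K} (hw0 : w ≠ 0)
    (hw : B *ᵥ w = c • w) : c = 0 ∨ c = -a := by
  have hsum : c * ∑ j, w j = 0 := by
    simpa [hw, Finset.mul_sum] using sum_mulVec_eq_zero_of_eq_div_sub_ite hB w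
  refine or_iff_not_imp_left.2 fun hc => ?_
  have : (c + a) • w = 0 := by
    rw [add_smul, ← hw, mulVec_eq_neg_smul_of_sum_eq_zero hB ((mul_eq_zero.1 hsum).resolve_left hc),
      neg_smul, neg_add_cancel]
  exact eq_neg_of_add_eq_zero_left ((smul_eq_zero.1 this).resolve_right hw0)

end RankOnePerturbation

/-- for the Jacobian `J = [[−I, B],[B, −I]]` with `B_{ij} = α/d − α·1_{i=j}`:
if `α > 1` then `α − 1 > 0` is an eigenvalue of `J` (linear instability of `(U,U)`);
if `0 < α < 1` then every complex eigenvalue of `J` has strictly negative real part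
(`(U,U)` is attracting). -/
theorem stmt_3 (d : ℕ) (hd : 2 ≤ d) (α : ℝ) (hα : 0 < α)
    (B : Matrix (Fin d) (Fin d) ℝ)
    (hB : ∀ i j, B i j = α / d - if i = j then α else 0)
    (J : Matrix (Fin d ⊕ Fin d) (Fin d ⊕ Fin d) ℝ)
    (hJ : J = Matrix.fromBlocks (-1) B B (-1)) :
    (1 < α → 0 < α - 1 ∧ (α - 1) ∈ spectrum ℝ J) ∧
      (α < 1 → ∀ μ ∈ spectrum ℂ (J.map (Complex.ofReal · )), μ.re < 0) := by
  refine ⟨fun hα1 => ⟨by linarith, ?_⟩, fun hα1 μ hμ => ?_⟩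
  · let w : Fin d → ℝ := Pi.single ⟨0, by omega⟩ 1 - Pi.single ⟨1, by omega⟩ 1
    have hw0 : w ≠ 0 := fun h => by
      simpa [w, Pi.single_apply, Fin.ext_iff] using congrFun h ⟨0, by omega⟩
    have hw : B *ᵥ w = (-α) • w := mulVec_eq_neg_smul_of_sum_eq_zero hB (by simp [w])
    refine (mem_spectrum_iff_exists_mulVec_eq_smul J _).2 ⟨Sum.elim w (-w), ?_, ?_⟩
    · exact fun h => hw0 (funext fun i => congrFun h (Sum.inl i))
    · rw [hJ, fromBlocks_neg_one_mulVec_elim_neg B hw]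
      rw [show -(-α + 1) = α - 1 by ring]
  · have hBc : ∀ i j, B.map Complex.ofReal i j = (α : ℂ) / d - if i = j then (α : ℂ) else 0 := by
      intro i j
      rw [map_apply, hB]
      split_ifs <;> push_cast <;> ring
    have hJc : J.map (Complex.ofReal ·) =
        fromBlocks (-1) (B.map Complex.ofReal) (B.map Complex.ofReal) (-1) := by
      simp [hJ, fromBlocks_map, Matrix.map_neg, Matrix.map_one]
    obtain ⟨v, hv0, hv⟩ := (mem_spectrum_iff_exists_mulVec_eq_smul _ μ).1 hμ
    rw [hJc] at hv
    obtain ⟨w, hw0, hw | hw⟩ := exists_eigenvector_of_fromBlocks_neg_one _ hv0 hv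
    all_goals
      rcases eq_zero_or_eq_neg_of_mulVec_eq_smul hBc hw0 hw with h | h <;>
        · have := congrArg Complex.re h
          simp only [neg_add_rev, Complex.add_re, Complex.neg_re, Complex.one_re, Complex.zero_re,
            Complex.ofReal_re] at this
          linarith
end

section
/- For every integer d ≥ 3 there exists α₀ > 0 such that for every α > α₀ and every δ > 0 with 2 d^{1/(α+1)} δ ≤ 1/d the following holds: for every (u,v) ∈ D with ∑_{i=1}^d u_i v_i ≥ (3/2) d^{1/(α+1)} δ, one has −2 ∑_{i=1}^d u_i v_i + (∑_{i=1}^d u_i f_δ(u_i)^{−α})/(∑_{k=1}^d f_δ(u_k)^{−α}) + (∑_{i=1}^d v_i f_δ(v_i)^{−α})/(∑_{k=1}^d f_δ(v_k)^{−α}) ≤ 0, and equality holds if and only if u = v = (1/d, …, 1/d). (This expression is the derivative dH/dt of H(u,v) = ∑ u_i v_i along the flow of F.) -/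
/-!
Write `dH/dt = -2 H(u, v) + M(u) + M(v)`, where `M(u)` is the mean of the coordinates of `u`
weighted by `f_δ(u_i)^(-α)`; for large `α` these weights concentrate on the smallest coordinates.

Near the barycentre, strong convexity of `x ↦ x^(-α)` (and Bernoulli's inequality a little
further out) gives `M(u) ≤ 1/d - |u - 1/d|²`, strictly unless `u` is uniform. Since
`|u - 1/d|² + |v - 1/d|² ≥ 2/d - 2H`, this settles the case where `u` and `v` are both near the
barycentre. Otherwise a coordinate `u_j` well below `1/d` dominates the weights, so that
`M(u) < (1 + γ) max(u_j, ρ)` with `ρ = d^(1/(α+1)) δ`, and the bounds `H ≥ min u`,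
`H ≥ u_j + v_k - d u_j v_k` (for minimal `u_j`, `v_k`) and `|H - 1/d| ≤ max |u_i - 1/d|` finish
the proof.
-/

open Finset

/-- `f_δ(x) = max(δ, x)`. -/
noncomputable def fdel (δ x : ℝ) : ℝ := max δ x

/-- The derivative `dH/dt` of `H(u,v) = ∑ u_i v_i` along the flow of `F`:
`−2 ∑ u_i v_i + (∑ u_i f_δ(u_i)^{−α})/(∑ f_δ(u_k)^{−α}) + (∑ v_i f_δ(v_i)^{−α})/(∑ f_δ(v_k)^{−α})`. -/
noncomputable def dHdt (d : ℕ) (δ α : ℝ) (u v : Fin d → ℝ) : ℝ :=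
  -2 * ∑ i, u i * v i +
    (∑ i, u i * fdel δ (u i) ^ (-α)) / (∑ k, fdel δ (u k) ^ (-α)) +
    (∑ i, v i * fdel δ (v i) ^ (-α)) / (∑ k, fdel δ (v k) ^ (-α))

open Real Filter Topology

noncomputable def tiltedMean {ι : Type*} [Fintype ι] (δ α : ℝ) (u : ι → ℝ) : ℝ :=
  (∑ i, u i * fdel δ (u i) ^ (-α)) / ∑ k, fdel δ (u k) ^ (-α)

lemma dHdt_eq_tiltedMean (d : ℕ) (δ α : ℝ) (u v : Fin d → ℝ) :
    dHdt d δ α u v = -2 * ∑ i, u i * v i + tiltedMean δ α u + tiltedMean δ α v := rfl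

section TiltedMean

variable {ι : Type*} [Fintype ι] {δ α : ℝ}

lemma fdel_pos (hδ : 0 < δ) (x : ℝ) : 0 < fdel δ x := hδ.trans_le (le_max_left _ _)

lemma fdel_of_le {x : ℝ} (h : δ ≤ x) : fdel δ x = x := max_eq_right h

lemma sum_fdel_rpow_pos [Nonempty ι] (hδ : 0 < δ) (u : ι → ℝ) :
    0 < ∑ k, fdel δ (u k) ^ (-α) :=
  sum_pos (fun _ _ => rpow_pos_of_pos (fdel_pos hδ _) _) univ_nonempty

lemma tiltedMean_sub [Nonempty ι] (hδ : 0 < δ) (u : ι → ℝ) (T : ℝ) :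
    tiltedMean δ α u - T
      = (∑ i, fdel δ (u i) ^ (-α) * (u i - T)) / ∑ k, fdel δ (u k) ^ (-α) := by
  rw [tiltedMean, div_sub' (sum_fdel_rpow_pos hδ u).ne', sum_mul, ← sum_sub_distrib]
  exact congrArg (· / _) (sum_congr rfl fun i _ => by ring)

lemma tiltedMean_lt_of_sum_neg [Nonempty ι] (hδ : 0 < δ) {u : ι → ℝ} {T : ℝ}
    (h : ∑ i, fdel δ (u i) ^ (-α) * (u i - T) < 0) : tiltedMean δ α u < T :=
  sub_neg.mp (tiltedMean_sub hδ u T ▸ div_neg_of_neg_of_pos h (sum_fdel_rpow_pos hδ u))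

lemma tiltedMean_const [Nonempty ι] (hδ : 0 < δ) (c : ℝ) :
    tiltedMean δ α (fun _ : ι => c) = c := by
  rw [tiltedMean, ← mul_sum, mul_div_cancel_right₀ _ (sum_fdel_rpow_pos hδ _).ne']

lemma tiltedMean_lt_of_dominant {d : ℕ} {u : Fin d → ℝ} {T B : ℝ} (hδ : 0 < δ) (j : Fin d)
    (hB : ∀ k ≠ j, fdel δ (u k) ^ (-α) * (u k - T) ≤ B)
    (hj : (d - 1) * B < fdel δ (u j) ^ (-α) * (T - u j)) :
    tiltedMean δ α u < T := by
  have : Nonempty (Fin d) := ⟨j⟩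
  refine tiltedMean_lt_of_sum_neg hδ ?_
  have hrest : ∑ k ∈ univ.erase j, fdel δ (u k) ^ (-α) * (u k - T) ≤ (d - 1) * B := by
    have := sum_le_card_nsmul (univ.erase j) _ _ fun k hk => hB k (ne_of_mem_erase hk)
    rwa [card_erase_of_mem (mem_univ j), card_univ, Fintype.card_fin, nsmul_eq_mul,
      Nat.cast_pred (Fin.pos j)] at this
  rw [← add_sum_erase _ _ (mem_univ j)]
  have hjT : fdel δ (u j) ^ (-α) * (u j - T) = -(fdel δ (u j) ^ (-α) * (T - u j)) := by ring
  linarith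

lemma fdel_rpow_neg_mul_sub_le_rpow (hδ : 0 < δ) (hα : 1 ≤ α) {T : ℝ} (hT : δ ≤ T)
    (x : ℝ) : fdel δ x ^ (-α) * (x - T) ≤ T ^ (1 - α) := by
  have hT0 : 0 < T := hδ.trans_le hT
  rcases le_or_gt x T with hxT | hxT
  · exact (mul_nonpos_of_nonneg_of_nonpos (rpow_pos_of_pos (fdel_pos hδ x) _).le
      (sub_nonpos.mpr hxT)).trans (rpow_pos_of_pos hT0 _).le
  · have hx0 : 0 < x := hT0.trans hxT
    rw [fdel_of_le (hT.trans hxT.le)]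
    calc x ^ (-α) * (x - T) ≤ x ^ (-α) * x :=
          mul_le_mul_of_nonneg_left (by linarith) (rpow_pos_of_pos hx0 _).le
      _ = x ^ (1 - α) := by rw [← rpow_add_one hx0.ne', neg_add_eq_sub]
      _ ≤ T ^ (1 - α) := rpow_le_rpow_of_nonpos hT0 hxT.le (by linarith)

lemma fdel_rpow_neg_mul_sub_le (hδ : 0 < δ) (hα : 0 ≤ α) {T B x : ℝ} (hT : δ ≤ T)
    (hB : 0 ≤ B) (hxB : x - T ≤ B) :
    fdel δ x ^ (-α) * (x - T) ≤ T ^ (-α) * B := by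
  have hT0 : 0 < T := hδ.trans_le hT
  rcases le_or_gt x T with hxT | hxT
  · exact (mul_nonpos_of_nonneg_of_nonpos (rpow_pos_of_pos (fdel_pos hδ x) _).le
      (sub_nonpos.mpr hxT)).trans (mul_nonneg (rpow_pos_of_pos hT0 _).le hB)
  · rw [fdel_of_le (hT.trans hxT.le)]
    exact mul_le_mul (rpow_le_rpow_of_nonpos hT0 hxT.le (by linarith)) hxB
      (by linarith) (rpow_pos_of_pos hT0 _).le

lemma tiltedMean_lt_one_add_mul_max {d : ℕ} {u : Fin d → ℝ} {γ ρ : ℝ} (hδ : 0 < δ)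
    (hδρ : δ ≤ ρ) (hγ : 0 < γ) (hα : 1 ≤ α) (hαγ : (d - 1) * (1 + γ) ^ (1 - α) < γ)
    (j : Fin d) : tiltedMean δ α u < (1 + γ) * max (u j) ρ := by
  set M := max (u j) ρ
  have hM : 0 < M := hδ.trans_le (hδρ.trans (le_max_right _ _))
  have hT : δ ≤ (1 + γ) * M :=
    (hδρ.trans (le_max_right _ _)).trans (le_mul_of_one_le_left hM.le (by linarith))
  refine tiltedMean_lt_of_dominant hδ j
    (fun k _ => fdel_rpow_neg_mul_sub_le_rpow hδ hα hT (u k)) ?_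
  have hwj : M ^ (-α) ≤ fdel δ (u j) ^ (-α) :=
    rpow_le_rpow_of_nonpos (fdel_pos hδ _)
      (max_le (hδρ.trans (le_max_right _ _)) (le_max_left _ _)) (by linarith)
  have hMpow : 0 < M ^ (1 - α) := rpow_pos_of_pos hM _
  calc (d - 1) * ((1 + γ) * M) ^ (1 - α) = (d - 1) * (1 + γ) ^ (1 - α) * M ^ (1 - α) := by
        rw [mul_rpow (by linarith) hM.le, mul_assoc]
    _ < γ * M ^ (1 - α) := mul_lt_mul_of_pos_right hαγ hMpow
    _ = M ^ (-α) * (γ * M) := by rw [sub_eq_neg_add, rpow_add_one hM.ne']; ring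
    _ ≤ fdel δ (u j) ^ (-α) * ((1 + γ) * M - u j) :=
        mul_le_mul hwj (by linarith [le_max_left (u j) ρ]) (by positivity)
          (rpow_pos_of_pos (fdel_pos hδ _) _).le

end TiltedMean

section Simplex

variable {d : ℕ} {u v : Fin d → ℝ}

lemma min_le_sum_mul (hv0 : ∀ i, 0 ≤ v i) (hv1 : ∑ i, v i = 1) {j : Fin d}
    (hj : ∀ i, u j ≤ u i) : u j ≤ ∑ i, u i * v i := by
  calc u j = ∑ i, u j * v i := by rw [← mul_sum, hv1, mul_one]
    _ ≤ ∑ i, u i * v i := sum_le_sum fun i _ => mul_le_mul_of_nonneg_right (hj i) (hv0 i)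

lemma sum_sub_mul_sub (hu1 : ∑ i, u i = 1) (hv1 : ∑ i, v i = 1) (a b : ℝ) :
    ∑ i, (u i - a) * (v i - b) = ∑ i, u i * v i - b - a + d * (a * b) := by
  simp only [sub_mul, mul_sub, sum_sub_distrib, ← sum_mul, ← mul_sum, hu1, hv1, sum_const,
    card_univ, Fintype.card_fin, nsmul_eq_mul]
  ring

lemma add_sub_mul_le_sum_mul (hu1 : ∑ i, u i = 1) (hv1 : ∑ i, v i = 1) {j k : Fin d}
    (hj : ∀ i, u j ≤ u i) (hk : ∀ i, v k ≤ v i) :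
    u j + v k - d * (u j * v k) ≤ ∑ i, u i * v i := by
  have := sum_nonneg fun i (_ : i ∈ univ) => mul_nonneg (sub_nonneg.mpr (hj i))
    (sub_nonneg.mpr (hk i))
  rw [sum_sub_mul_sub hu1 hv1] at this
  linarith

lemma le_one_sub_mul_min (hu1 : ∑ i, u i = 1) {j : Fin d} (hj : ∀ i, u j ≤ u i) (i : Fin d) :
    u i ≤ 1 - (d - 1) * u j := by
  have := card_nsmul_le_sum (univ.erase i) u (u j) fun k _ => hj k
  rw [card_erase_of_mem (mem_univ i), card_univ, Fintype.card_fin, nsmul_eq_mul,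
    Nat.cast_pred (Fin.pos i)] at this
  linarith [add_sum_erase univ u (mem_univ i)]

lemma min_le_inv (hu1 : ∑ i, u i = 1) {j : Fin d} (hj : ∀ i, u j ≤ u i) : u j ≤ 1 / d := by
  have hd : (0 : ℝ) < d := Nat.cast_pos.mpr (Fin.pos j)
  rw [le_div_iff₀ hd, mul_comm]
  linarith [le_one_sub_mul_min hu1 hj j]

lemma sum_sub_inv [NeZero d] (hu1 : ∑ i, u i = 1) : ∑ i, (u i - 1 / d) = 0 := by
  rw [sum_sub_distrib, hu1, sum_const, card_univ, Fintype.card_fin, nsmul_eq_mul,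
    mul_one_div_cancel (Nat.cast_ne_zero.mpr (NeZero.ne d)), sub_self]

lemma abs_sub_inv_le (hd : 2 ≤ d) (hu1 : ∑ i, u i = 1) {j : Fin d} (hj : ∀ i, u j ≤ u i)
    (i : Fin d) : |u i - 1 / d| ≤ (d - 1) * (1 / d - u j) := by
  have hd' : (2 : ℝ) ≤ d := by exact_mod_cast hd
  have hd0 : (d : ℝ) * (1 / d) = 1 := mul_one_div_cancel (by linarith)
  have hg : 0 ≤ 1 / d - u j := sub_nonneg.mpr (min_le_inv hu1 hj)
  rw [abs_le]
  constructor
  · nlinarith [hj i]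
  · nlinarith [le_one_sub_mul_min hu1 hj i]

lemma abs_sum_mul_sub_inv_le (hv0 : ∀ i, 0 ≤ v i) (hv1 : ∑ i, v i = 1) {r : ℝ}
    (hu : ∀ i, |u i - 1 / d| ≤ r) : |∑ i, u i * v i - 1 / d| ≤ r := by
  have hS : ∑ i, u i * v i - 1 / d = ∑ i, (u i - 1 / d) * v i := by
    simp only [sub_mul, sum_sub_distrib, ← mul_sum, hv1, mul_one]
  calc |∑ i, u i * v i - 1 / d| ≤ ∑ i, |u i - 1 / d| * v i := by
        rw [hS]
        exact (abs_sum_le_sum_abs _ _).trans_eq (sum_congr rfl fun i _ => by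
          rw [abs_mul, abs_of_nonneg (hv0 i)])
    _ ≤ ∑ i, r * v i := sum_le_sum fun i _ => mul_le_mul_of_nonneg_right (hu i) (hv0 i)
    _ = r := by rw [← mul_sum, hv1, mul_one]

lemma inv_sub_sum_sq_add_le [NeZero d] (hu1 : ∑ i, u i = 1) (hv1 : ∑ i, v i = 1) :
    1 / d - ∑ i, (u i - 1 / d) ^ 2 + (1 / d - ∑ i, (v i - 1 / d) ^ 2)
      ≤ 2 * ∑ i, u i * v i := by
  have hd : (d : ℝ) * (1 / d * (1 / d)) = 1 / d := by field_simp
  have hcross := sum_sub_mul_sub hu1 hv1 (1 / d) (1 / d)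
  have hsq : 0 ≤ ∑ i, ((u i - 1 / d) + (v i - 1 / d)) ^ 2 :=
    sum_nonneg fun i _ => sq_nonneg _
  simp only [add_sq, sum_add_distrib, mul_assoc, ← mul_sum] at hsq
  rw [hd] at hcross
  linarith

lemma mul_add_min_le_two_mul_sum_mul (hu0 : ∀ i, 0 ≤ u i) (hu1 : ∑ i, u i = 1)
    (hv0 : ∀ i, 0 ≤ v i) (hv1 : ∑ i, v i = 1) {j k : Fin d} (hj : ∀ i, u j ≤ u i)
    (hk : ∀ i, v k ≤ v i) {ε : ℝ} (hu : u j ≤ 1 / d - ε) (hv : v k ≤ 1 / d - ε) :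
    (1 + d * ε) * (u j + v k) ≤ 2 * ∑ i, u i * v i := by
  have hlow := add_sub_mul_le_sum_mul hu1 hv1 hj hk
  have hdc : (d : ℝ) * (1 / d) = 1 := mul_one_div_cancel (Nat.cast_ne_zero.mpr (Fin.pos j).ne')
  have hd : (0 : ℝ) ≤ d := Nat.cast_nonneg d
  have hu' : d * u j ≤ 1 - d * ε := by
    simpa only [mul_sub, hdc] using mul_le_mul_of_nonneg_left hu hd
  have hv' : d * v k ≤ 1 - d * ε := by
    simpa only [mul_sub, hdc] using mul_le_mul_of_nonneg_left hv hd
  nlinarith [mul_le_mul_of_nonneg_right hu' (hv0 k), mul_le_mul_of_nonneg_right hv' (hu0 j)]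

end Simplex

section RpowNeg

lemma rpow_neg_add_mul_le {α a b : ℝ} (hα : 1 ≤ α) (ha : 0 < a) (hab : a ≤ b) :
    b ^ (-α) + α * (b - a) * b ^ (-(α + 1)) ≤ a ^ (-α) := by
  have hb : 0 < b := ha.trans_le hab
  have hbern : 1 + α * ((b - a) / a) ≤ (b / a) ^ α := by
    have h := one_add_mul_self_le_rpow_one_add
      (by linarith [div_nonneg (sub_nonneg.mpr hab) ha.le] : -1 ≤ (b - a) / a) hα
    rwa [one_add_div ha.ne', add_sub_cancel] at h
  have ha' : a ^ (-α) = b ^ (-α) * (b / a) ^ α := by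
    rw [div_rpow hb.le ha.le, rpow_neg ha.le, rpow_neg hb.le]
    field_simp [(rpow_pos_of_pos hb α).ne']
  have hb' : b ^ (-(α + 1)) = b ^ (-α) / b := by
    rw [neg_add, rpow_add hb, rpow_neg_one, div_eq_mul_inv]
  have hs : (b - a) / b ≤ (b - a) / a := div_le_div_of_nonneg_left (by linarith) ha hab
  have hbα : 0 ≤ b ^ (-α) := (rpow_pos_of_pos hb _).le
  rw [ha', hb']
  calc b ^ (-α) + α * (b - a) * (b ^ (-α) / b) = b ^ (-α) * (1 + α * ((b - a) / b)) := by ring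
    _ ≤ b ^ (-α) * (1 + α * ((b - a) / a)) := by gcongr
    _ ≤ b ^ (-α) * (b / a) ^ α := by gcongr

/-- Strong monotonicity of `x ↦ -x ^ (-α)` on `(0, C]`, with modulus `α C ^ (-(α + 1))`. -/
lemma mul_rpow_neg_mul_sq_le {α x y C : ℝ} (hα : 1 ≤ α) (hx : 0 < x) (hy : 0 < y)
    (hxC : x ≤ C) (hyC : y ≤ C) :
    α * C ^ (-(α + 1)) * (x - y) ^ 2 ≤ (y ^ (-α) - x ^ (-α)) * (x - y) := by
  wlog hyx : y ≤ x generalizing x y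
  · have := this hy hx hyC hxC (le_of_not_ge hyx)
    linarith
  have h := rpow_neg_add_mul_le hα hy hyx
  have hC : C ^ (-(α + 1)) ≤ x ^ (-(α + 1)) := rpow_le_rpow_of_nonpos hx hxC (by linarith)
  have hsq : 0 ≤ α * (x - y) ^ 2 := by positivity
  nlinarith [mul_le_mul_of_nonneg_left hC hsq]

lemma one_sub_rpow_neg_mul_one_add_rpow_lt {α β t D : ℝ} (hD : 1 ≤ D) (ht : 0 < t)
    (ht2 : t ≤ 1 / 2) (hαt : α * t ≤ β) (hα : exp (2 * D * (β + 1)) < α) :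
    (1 - t) ^ (-α) * (1 + (D - 1) * t) ^ (α + 1) < α := by
  have hα0 : 0 < α := (exp_pos _).trans hα
  have hβ : 0 ≤ β := (mul_pos hα0 ht).le.trans hαt
  have hE : exp (-(2 * t)) ≤ 1 - t := by
    rw [exp_neg, inv_le_comm₀ (exp_pos _) (by linarith)]
    have := add_one_le_exp (2 * t)
    rw [inv_eq_one_div, div_le_iff₀ (by linarith)]
    nlinarith
  have h1 : (1 - t) ^ (-α) ≤ exp (2 * t * α) := by
    calc (1 - t) ^ (-α) ≤ exp (-(2 * t)) ^ (-α) :=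
          rpow_le_rpow_of_nonpos (exp_pos _) hE (by linarith)
      _ = exp (2 * t * α) := by rw [← exp_mul]; ring_nf
  have h2 : (1 + (D - 1) * t) ^ (α + 1) ≤ exp ((D - 1) * t * (α + 1)) := by
    rw [exp_mul]
    exact rpow_le_rpow (by nlinarith) (by linarith [add_one_le_exp ((D - 1) * t)])
      (by linarith)
  have h3 : 2 * t * α + (D - 1) * t * (α + 1) ≤ 2 * D * (β + 1) := by
    nlinarith [mul_le_mul_of_nonneg_left hαt (by linarith : (0 : ℝ) ≤ D + 1)]
  calc (1 - t) ^ (-α) * (1 + (D - 1) * t) ^ (α + 1)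
      ≤ exp (2 * t * α) * exp ((D - 1) * t * (α + 1)) :=
        mul_le_mul h1 h2 (rpow_nonneg (by nlinarith) _) (exp_pos _).le
    _ = exp (2 * t * α + (D - 1) * t * (α + 1)) := (exp_add _ _).symm
    _ ≤ exp (2 * D * (β + 1)) := exp_le_exp.mpr h3
    _ < α := hα

lemma mul_inv_sub_rpow_neg_lt {d : ℕ} [NeZero d] {α β g : ℝ} (hg : 0 < g)
    (hdg : d * g ≤ 1 / 2) (hαg : α * (d * g) ≤ β) (hα : exp (2 * d * (β + 1)) < α) :
    d * (1 / d - g) ^ (-α) < α * (1 / d + (d - 1) * g) ^ (-(α + 1)) := by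
  have hd : (1 : ℝ) ≤ d := Nat.one_le_cast.mpr (Nat.pos_of_ne_zero (NeZero.ne d))
  have hd0 : (0 : ℝ) < d := by linarith
  set t := d * g with ht
  have ht0 : 0 < t := mul_pos hd0 hg
  have hkey := one_sub_rpow_neg_mul_one_add_rpow_lt hd ht0 hdg hαg hα
  have hA : 0 < 1 + (d - 1) * t := by nlinarith
  have hm : 1 / d - g = 1 / d * (1 - t) := by rw [ht]; field_simp
  have hC : 1 / d + (d - 1) * g = 1 / d * (1 + (d - 1) * t) := by field_simp; ring
  have hc : (0 : ℝ) ≤ 1 / d := by positivity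
  have hcpow : ((1 : ℝ) / d) ^ (-(α + 1)) = d * (1 / d) ^ (-α) := by
    rw [neg_add, rpow_add (by positivity), rpow_neg_one, one_div, inv_inv, mul_comm]
  rw [hm, hC, mul_rpow hc (by linarith), mul_rpow hc hA.le, hcpow, rpow_neg hA.le]
  have hpos : 0 < d * (1 / (d : ℝ)) ^ (-α) := by positivity
  calc (d : ℝ) * ((1 / d) ^ (-α) * (1 - t) ^ (-α))
      = d * (1 / d) ^ (-α) * (1 - t) ^ (-α) := by ring
    _ < d * (1 / d) ^ (-α) * (α * ((1 + (d - 1) * t) ^ (α + 1))⁻¹) := by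
        gcongr
        rw [← div_eq_mul_inv, lt_div_iff₀ (by positivity)]
        exact hkey
    _ = α * (d * (1 / d) ^ (-α) * ((1 + (d - 1) * t) ^ (α + 1))⁻¹) := by ring

end RpowNeg

noncomputable def nearRadius (d : ℕ) : ℝ := 1 / (2 * d * (d - 1) ^ 2)

section NearRadius

variable {d : ℕ}

lemma nearRadius_pos (hd : 2 ≤ d) : 0 < nearRadius d := by
  have hD : (2 : ℝ) ≤ d := by exact_mod_cast hd
  unfold nearRadius
  have : 0 < (d : ℝ) - 1 := by linarith
  positivity

lemma mul_nearRadius (hd : 2 ≤ d) : 2 * d * (d - 1) ^ 2 * nearRadius d = 1 := by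
  have hD : (2 : ℝ) ≤ d := by exact_mod_cast hd
  have : (d : ℝ) - 1 ≠ 0 := by linarith
  have : (d : ℝ) ≠ 0 := by linarith
  unfold nearRadius
  field_simp

lemma nearRadius_le (hd : 3 ≤ d) : nearRadius d ≤ 1 / (4 * d) := by
  have hD : (3 : ℝ) ≤ d := by exact_mod_cast hd
  unfold nearRadius
  gcongr <;> nlinarith

lemma natCast_mul_nearRadius_le (hd : 2 ≤ d) : d * nearRadius d ≤ 1 / 2 := by
  have hD : (2 : ℝ) ≤ d := by exact_mod_cast hd
  have h := mul_nearRadius hd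
  have hκ := nearRadius_pos hd
  have h1 : 1 ≤ ((d : ℝ) - 1) ^ 2 := by nlinarith
  nlinarith [mul_le_mul_of_nonneg_right h1 (by positivity : (0 : ℝ) ≤ d * nearRadius d)]

lemma sum_sq_sub_inv_le_half {u : Fin d → ℝ} (hd : 2 ≤ d) (hu1 : ∑ i, u i = 1) {j : Fin d}
    (hj : ∀ i, u j ≤ u i) (hgap : 1 / d - u j ≤ nearRadius d) :
    ∑ i, (u i - 1 / d) ^ 2 ≤ (1 / d - u j) / 2 := by
  set g := 1 / (d : ℝ) - u j
  have hg : 0 ≤ g := sub_nonneg.mpr (min_le_inv hu1 hj)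
  have habs := abs_sub_inv_le hd hu1 hj
  have hsq : ∑ i, (u i - 1 / d) ^ 2 ≤ d * ((d - 1) * g) ^ 2 := by
    have := sum_le_card_nsmul univ (fun i => (u i - 1 / d) ^ 2) (((d - 1) * g) ^ 2)
      fun i _ => sq_le_sq' (abs_le.mp (habs i)).1 (abs_le.mp (habs i)).2
    rwa [card_univ, Fintype.card_fin, nsmul_eq_mul] at this
  have hκ := mul_nearRadius hd
  nlinarith [mul_le_mul_of_nonneg_left hgap (by positivity : (0 : ℝ) ≤ d * (d - 1) ^ 2 * g)]

end NearRadius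

section NearUniform

variable {d : ℕ} {δ α : ℝ} {u : Fin d → ℝ}

lemma tiltedMean_lt_sub_sum_sq_of_mul_rpow_lt {c m C : ℝ} (hδ : 0 < δ) (hα : 1 ≤ α)
    (hδm : δ ≤ m) (hmu : ∀ i, m ≤ u i) (huC : ∀ i, u i ≤ C) (hc : 0 < c) (hcC : c ≤ C)
    (hmean : ∑ i, (u i - c) = 0) (hX : 0 < ∑ i, (u i - c) ^ 2)
    (hkey : d * m ^ (-α) < α * C ^ (-(α + 1))) :
    tiltedMean δ α u < c - ∑ i, (u i - c) ^ 2 := by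
  obtain ⟨j, -⟩ := exists_ne_zero_of_sum_ne_zero hX.ne'
  have : Nonempty (Fin d) := ⟨j⟩
  have hm : 0 < m := hδ.trans_le hδm
  have hu : ∀ i, 0 < u i := fun i => hm.trans_le (hmu i)
  have hfdel : ∀ i, fdel δ (u i) = u i := fun i => fdel_of_le (hδm.trans (hmu i))
  set X := ∑ i, (u i - c) ^ 2
  set A := α * C ^ (-(α + 1))
  have hN : ∑ i, u i ^ (-α) * (u i - c) ≤ -(A * X) := by
    calc ∑ i, u i ^ (-α) * (u i - c) ≤ ∑ i, (c ^ (-α) * (u i - c) - A * (u i - c) ^ 2) :=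
          sum_le_sum fun i _ => by
            linarith [mul_rpow_neg_mul_sq_le hα (hu i) hc (huC i) hcC]
      _ = -(A * X) := by rw [sum_sub_distrib, ← mul_sum, ← mul_sum, hmean]; ring
  have hW : ∑ i, u i ^ (-α) < A := by
    refine lt_of_le_of_lt ?_ hkey
    have := sum_le_card_nsmul univ (fun i => u i ^ (-α)) (m ^ (-α))
      fun i _ => rpow_le_rpow_of_nonpos hm (hmu i) (by linarith)
    rwa [card_univ, Fintype.card_fin, nsmul_eq_mul] at this
  have hW0 : 0 < ∑ i, u i ^ (-α) := sum_pos (fun i _ => rpow_pos_of_pos (hu i) _) univ_nonempty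
  have hsub := tiltedMean_sub (α := α) hδ u c
  simp only [hfdel] at hsub
  rw [lt_sub_comm, ← neg_lt_neg_iff, neg_sub, hsub, div_lt_iff₀ hW0]
  nlinarith [mul_lt_mul_of_pos_right hW hX]

lemma tiltedMean_lt_sub_sum_sq_of_large_gap (hd : 2 ≤ d) (hδ : 0 < δ) (hα : 1 ≤ α)
    (hu1 : ∑ i, u i = 1) {j : Fin d} (hj : ∀ i, u j ≤ u i) (hδj : δ ≤ u j)
    (hg : 0 < 1 / d - u j) (hX : ∑ i, (u i - 1 / d) ^ 2 ≤ (1 / d - u j) / 2)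
    (hαg : 4 * d ^ 2 < α * (d * (1 / d - u j))) :
    tiltedMean δ α u < 1 / d - ∑ i, (u i - 1 / d) ^ 2 := by
  have hD : (2 : ℝ) ≤ d := by exact_mod_cast hd
  set c := 1 / (d : ℝ) with hc
  set m := u j
  set g := c - m
  set T := c - ∑ i, (u i - c) ^ 2
  have hm : 0 < m := hδ.trans_le hδj
  have hTm : m + g / 2 ≤ T := by linarith
  have hT : 0 < T := by linarith
  have hmd : d * m ≤ 1 := by
    have : (d : ℝ) * c = 1 := by rw [hc]; field_simp
    nlinarith
  refine tiltedMean_lt_of_dominant (B := T ^ (-α) * (d * g)) hδ j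
    (fun k _ => fdel_rpow_neg_mul_sub_le hδ (by linarith) (hδj.trans (by linarith))
      (by positivity) (by linarith [(abs_le.mp (abs_sub_inv_le hd hu1 hj k)).2])) ?_
  have hbern : 1 + α * (T / m - 1) ≤ (T / m) ^ α := by
    have h := one_add_mul_self_le_rpow_one_add
      (by linarith [div_pos hT hm] : -1 ≤ T / m - 1) hα
    rwa [add_sub_cancel] at h
  have hTm' : d * g / 2 ≤ T / m - 1 := by
    rw [le_sub_iff_add_le, le_div_iff₀ hm]
    nlinarith
  have hratio : 2 * d ^ 2 < (T / m) ^ α := by nlinarith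
  have hpow : (T / m) ^ α * T ^ (-α) = m ^ (-α) := by
    rw [div_rpow hT.le hm.le, rpow_neg hT.le, rpow_neg hm.le]
    field_simp [(rpow_pos_of_pos hT α).ne']
  have hTα : 0 < T ^ (-α) := rpow_pos_of_pos hT _
  have hmα : 2 * d ^ 2 * T ^ (-α) < m ^ (-α) := hpow ▸ mul_lt_mul_of_pos_right hratio hTα
  rw [fdel_of_le hδj]
  nlinarith [mul_lt_mul_of_pos_right hmα (by linarith : (0 : ℝ) < g / 2),
    mul_le_mul_of_nonneg_left (by linarith : g / 2 ≤ T - m) (rpow_pos_of_pos hm (-α)).le,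
    mul_pos (mul_pos (by linarith : (0 : ℝ) < d) hTα) (by linarith : (0 : ℝ) < g)]

lemma tiltedMean_lt_of_near (hd : 3 ≤ d) (hδ : 0 < δ) (hδd : δ ≤ 1 / (2 * d))
    (hα : exp (2 * d * (4 * d ^ 2 + 1)) < α) (hu1 : ∑ i, u i = 1)
    (hnear : ∀ i, 1 / d - nearRadius d ≤ u i) (hne : u ≠ fun _ => 1 / (d : ℝ)) :
    tiltedMean δ α u < 1 / d - ∑ i, (u i - 1 / d) ^ 2 := by
  have hd2 : 2 ≤ d := by omega
  have : NeZero d := ⟨by omega⟩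
  have hD : (3 : ℝ) ≤ d := by exact_mod_cast hd
  have hα1 : 1 ≤ α := (one_le_exp (by positivity)).trans hα.le
  obtain ⟨j, -, hj⟩ := exists_min_image univ u univ_nonempty
  replace hj : ∀ i, u j ≤ u i := fun i => hj i (mem_univ i)
  set c := 1 / (d : ℝ) with hc
  set g := c - u j
  set X := ∑ i, (u i - c) ^ 2
  have hgκ : g ≤ nearRadius d := by linarith [hnear j]
  have habs : ∀ i, |u i - c| ≤ (d - 1) * g := abs_sub_inv_le hd2 hu1 hj
  have hg0 : 0 < g := by
    refine (sub_nonneg.mpr (min_le_inv hu1 hj)).lt_of_ne fun hg0 => hne (funext fun i => ?_)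
    have := habs i
    rw [show g = 0 from hg0.symm, mul_zero] at this
    exact sub_eq_zero.mp (abs_nonpos_iff.mp this)
  have hXg : X ≤ g / 2 := sum_sq_sub_inv_le_half hd2 hu1 hj hgκ
  have hX : 0 < X := by
    have := single_le_sum (f := fun i => (u i - c) ^ 2) (fun i _ => sq_nonneg _) (mem_univ j)
    have : (u j - c) ^ 2 = g ^ 2 := by ring
    nlinarith
  have hδj : δ ≤ u j := by
    have : 1 / (4 * (d : ℝ)) = c / 4 := by rw [hc]; field_simp
    have : 1 / (2 * (d : ℝ)) = c / 2 := by rw [hc]; field_simp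
    linarith [nearRadius_le hd, nearRadius_pos hd2, (by positivity : 0 < c)]
  by_cases hloc : α * (d * g) ≤ 4 * d ^ 2
  · refine tiltedMean_lt_sub_sum_sq_of_mul_rpow_lt (C := c + (d - 1) * g) hδ hα1 hδj hj
      (fun i => by linarith [(abs_le.mp (habs i)).2]) (by positivity)
      (by nlinarith) (sum_sub_inv hu1) hX ?_
    have hdg : (d : ℝ) * g ≤ 1 / 2 :=
      (mul_le_mul_of_nonneg_left hgκ (by positivity)).trans (natCast_mul_nearRadius_le hd2)
    have key := mul_inv_sub_rpow_neg_lt hg0 hdg hloc hα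
    rwa [← hc, show c - g = u j from sub_sub_cancel c (u j)] at key
  · exact tiltedMean_lt_sub_sum_sq_of_large_gap hd2 hδ hα1 hu1 hj hδj hg0 hXg (not_le.mp hloc)

lemma tiltedMean_le_of_near (hd : 3 ≤ d) (hδ : 0 < δ) (hδd : δ ≤ 1 / (2 * d))
    (hα : exp (2 * d * (4 * d ^ 2 + 1)) < α) (hu1 : ∑ i, u i = 1)
    (hnear : ∀ i, 1 / d - nearRadius d ≤ u i) :
    tiltedMean δ α u ≤ 1 / d - ∑ i, (u i - 1 / d) ^ 2 := by
  have : NeZero d := ⟨by omega⟩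
  by_cases hu : u = fun _ => 1 / (d : ℝ)
  · subst hu
    simp [tiltedMean_const hδ]
  · exact (tiltedMean_lt_of_near hd hδ hδd hα hu1 hnear hu).le

end NearUniform

noncomputable def coreRadius (d : ℕ) : ℝ := nearRadius d / (8 * d)

-- `4 d ^ 2` is the threshold on `α (d g)` between the tangent-line and the Bernoulli regime of
-- `tiltedMean_lt_of_near`; the second condition feeds `tiltedMean_lt_one_add_mul_max`.
def IsLargeExponent (d : ℕ) (α : ℝ) : Prop :=
  exp (2 * d * (4 * d ^ 2 + 1)) < α ∧ (d - 1) * (1 + coreRadius d) ^ (1 - α) < coreRadius d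

lemma coreRadius_pos {d : ℕ} (hd : 2 ≤ d) : 0 < coreRadius d := by
  have : (0 : ℝ) < d := by exact_mod_cast (by omega : 0 < d)
  have := nearRadius_pos hd
  unfold coreRadius
  positivity

lemma eight_mul_coreRadius {d : ℕ} (hd : 1 ≤ d) : 8 * d * coreRadius d = nearRadius d := by
  have : (d : ℝ) ≠ 0 := by exact_mod_cast (by omega : d ≠ 0)
  unfold coreRadius
  field_simp

lemma IsLargeExponent.one_le {d : ℕ} {α : ℝ} (hα : IsLargeExponent d α) : 1 ≤ α :=
  (one_le_exp (by positivity)).trans hα.1.le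

lemma eventually_isLargeExponent {d : ℕ} (hd : 2 ≤ d) :
    ∀ᶠ α in atTop, IsLargeExponent d α := by
  have hε := coreRadius_pos hd
  have hpow : Tendsto (fun α : ℝ => (d - 1) * (1 + coreRadius d) ^ (1 - α)) atTop (𝓝 0) := by
    have h1α : Tendsto (fun α : ℝ => 1 - α) atTop atBot := by
      simpa only [sub_eq_add_neg] using
        tendsto_atBot_add_const_left atTop (1 : ℝ) tendsto_neg_atTop_atBot
    simpa using ((tendsto_rpow_atBot_of_base_gt_one _ (by linarith)).comp h1α).const_mul
      ((d : ℝ) - 1)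
  exact (eventually_gt_atTop _).and (hpow.eventually (gt_mem_nhds hε))

section Cases

variable {d : ℕ} {δ α ρ : ℝ} {u v : Fin d → ℝ}

lemma tiltedMean_add_lt_of_core_of_far (hd : 3 ≤ d) (hδ : 0 < δ) (hδρ : δ ≤ ρ)
    (hρ : ρ ≤ 1 / (2 * d)) (hα : IsLargeExponent d α) (hu1 : ∑ i, u i = 1)
    (hcore : ∀ i, 1 / d - coreRadius d ≤ u i) (hv0 : ∀ i, 0 ≤ v i) (hv1 : ∑ i, v i = 1)
    {j : Fin d} (hfar : v j < 1 / d - nearRadius d) :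
    tiltedMean δ α u + tiltedMean δ α v < 2 * ∑ i, u i * v i := by
  have : NeZero d := ⟨by omega⟩
  have hD : (3 : ℝ) ≤ d := by exact_mod_cast hd
  set c := 1 / (d : ℝ) with hc
  set κ := nearRadius d
  set ε := coreRadius d
  set S := ∑ i, u i * v i
  have hε := coreRadius_pos (by omega : 2 ≤ d)
  have hκε : 8 * d * ε = κ := eight_mul_coreRadius (by omega)
  have hκ : κ ≤ c / 4 := by
    have : 1 / (4 * (d : ℝ)) = c / 4 := by rw [hc]; field_simp
    linarith [nearRadius_le hd]
  have hc3 : c ≤ 1 / 3 := by rw [hc]; gcongr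
  have hc2 : 1 / (2 * (d : ℝ)) = c / 2 := by rw [hc]; field_simp
  obtain ⟨j', -, hj'⟩ := exists_min_image univ u univ_nonempty
  have hGu : tiltedMean δ α u ≤ c := by
    refine (tiltedMean_le_of_near hd hδ (hδρ.trans hρ) hα.1 hu1
      fun i => by nlinarith [hcore i]).trans ?_
    linarith [sum_nonneg fun i (_ : i ∈ univ) => sq_nonneg (u i - c)]
  have hSc : |S - c| ≤ (d - 1) * ε := abs_sum_mul_sub_inv_le hv0 hv1 fun i =>
    (abs_sub_inv_le (by omega) hu1 (fun i => hj' i (mem_univ i)) i).trans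
      (mul_le_mul_of_nonneg_left (by linarith [hcore j']) (by linarith))
  have hρκ : ρ ≤ c - κ := by nlinarith [abs_le.mp hSc]
  have hGv : tiltedMean δ α v < (1 + ε) * (c - κ) :=
    (tiltedMean_lt_one_add_mul_max hδ hδρ hε hα.one_le hα.2 j).trans_le
      (mul_le_mul_of_nonneg_left (max_le hfar.le hρκ) (by linarith))
  nlinarith [abs_le.mp hSc]

lemma tiltedMean_add_lt_of_off_core (hd : 3 ≤ d) (hδ : 0 < δ) (hδρ : δ ≤ ρ)
    (hα : IsLargeExponent d α) (hu0 : ∀ i, 0 ≤ u i) (hu1 : ∑ i, u i = 1)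
    (hv0 : ∀ i, 0 ≤ v i) (hv1 : ∑ i, v i = 1) {j k : Fin d} (hj : ∀ i, u j ≤ u i)
    (hk : ∀ i, v k ≤ v i) (hu : u j < 1 / d - coreRadius d) (hv : v k < 1 / d - coreRadius d)
    (hS : 3 / 2 * ρ ≤ ∑ i, u i * v i) :
    tiltedMean δ α u + tiltedMean δ α v < 2 * ∑ i, u i * v i := by
  have hD : (3 : ℝ) ≤ d := by exact_mod_cast hd
  set ε := coreRadius d
  set S := ∑ i, u i * v i
  have hε := coreRadius_pos (by omega : 2 ≤ d)
  have hκε : 8 * d * ε = nearRadius d := eight_mul_coreRadius (by omega)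
  have hκ := nearRadius_le hd
  have hε5 : ε ≤ 1 / 5 := by
    have : 1 / (4 * (d : ℝ)) ≤ 1 / 12 := by gcongr; linarith
    nlinarith
  have hGu := tiltedMean_lt_one_add_mul_max (u := u) hδ hδρ hε hα.one_le hα.2 j
  have hGv := tiltedMean_lt_one_add_mul_max (u := v) hδ hδρ hε hα.one_le hα.2 k
  have hSu : u j ≤ S := min_le_sum_mul hv0 hv1 hj
  have hSv : v k ≤ S := by
    simpa only [S, mul_comm] using min_le_sum_mul (u := v) hu0 hu1 hk
  have hρ0 : 0 < ρ := hδ.trans_le hδρ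
  suffices (1 + ε) * (max (u j) ρ + max (v k) ρ) ≤ 2 * S by nlinarith
  by_cases hsmall : max (u j) ρ ≤ 2 / 3 * S ∨ max (v k) ρ ≤ 2 / 3 * S
  · have hmax : max (u j) ρ + max (v k) ρ ≤ 5 / 3 * S := by
      rcases hsmall with h | h <;>
        linarith [max_le hSu (by linarith : ρ ≤ S), max_le hSv (by linarith : ρ ≤ S)]
    nlinarith
  · simp only [not_or, not_le] at hsmall
    have hju : ρ ≤ u j :=
      (lt_max_iff.mp hsmall.1).elim (fun h => by linarith) fun h => by linarith
    have hkv : ρ ≤ v k :=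
      (lt_max_iff.mp hsmall.2).elim (fun h => by linarith) fun h => by linarith
    rw [max_eq_left hju, max_eq_left hkv]
    calc (1 + ε) * (u j + v k) ≤ (1 + d * ε) * (u j + v k) := by
          gcongr
          · linarith [hu0 j, hv0 k]
          · nlinarith
      _ ≤ 2 * S := mul_add_min_le_two_mul_sum_mul hu0 hu1 hv0 hv1 hj hk hu.le hv.le

end Cases

section Main

variable {d : ℕ} {δ α ρ : ℝ} {u v : Fin d → ℝ}

lemma tiltedMean_add_lt_of_far (hd : 3 ≤ d) (hδ : 0 < δ) (hδρ : δ ≤ ρ)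
    (hρ : ρ ≤ 1 / (2 * d)) (hα : IsLargeExponent d α) (hu0 : ∀ i, 0 ≤ u i)
    (hu1 : ∑ i, u i = 1) (hv0 : ∀ i, 0 ≤ v i) (hv1 : ∑ i, v i = 1)
    (hS : 3 / 2 * ρ ≤ ∑ i, u i * v i) {j : Fin d} (hfar : v j < 1 / d - nearRadius d) :
    tiltedMean δ α u + tiltedMean δ α v < 2 * ∑ i, u i * v i := by
  have : NeZero d := ⟨by omega⟩
  obtain ⟨ju, -, hju⟩ := exists_min_image univ u univ_nonempty
  obtain ⟨jv, -, hjv⟩ := exists_min_image univ v univ_nonempty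
  by_cases hcore : 1 / d - coreRadius d ≤ u ju
  · exact tiltedMean_add_lt_of_core_of_far hd hδ hδρ hρ hα hu1
      (fun i => hcore.trans (hju i (mem_univ i))) hv0 hv1 hfar
  · have hεκ : coreRadius d ≤ nearRadius d := by
      rw [← eight_mul_coreRadius (by omega : 1 ≤ d)]
      have : (8 : ℝ) ≤ 8 * d := by norm_cast; omega
      nlinarith [coreRadius_pos (by omega : 2 ≤ d)]
    exact tiltedMean_add_lt_of_off_core hd hδ hδρ hα hu0 hu1 hv0 hv1
      (fun i => hju i (mem_univ i)) (fun i => hjv i (mem_univ i)) (not_le.mp hcore)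
      (by linarith [hjv j (mem_univ j)]) hS

lemma dHdt_neg (hd : 3 ≤ d) (hδ : 0 < δ) (hδρ : δ ≤ ρ) (hρ : ρ ≤ 1 / (2 * d))
    (hα : IsLargeExponent d α) (hu0 : ∀ i, 0 ≤ u i) (hu1 : ∑ i, u i = 1)
    (hv0 : ∀ i, 0 ≤ v i) (hv1 : ∑ i, v i = 1) (hS : 3 / 2 * ρ ≤ ∑ i, u i * v i)
    (huv : ¬((u = fun _ => 1 / (d : ℝ)) ∧ (v = fun _ => 1 / (d : ℝ)))) :
    dHdt d δ α u v < 0 := by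
  have : NeZero d := ⟨by omega⟩
  have hδd : δ ≤ 1 / (2 * d) := hδρ.trans hρ
  suffices tiltedMean δ α u + tiltedMean δ α v < 2 * ∑ i, u i * v i by
    rw [dHdt_eq_tiltedMean]
    linarith
  by_cases hu : ∀ i, 1 / d - nearRadius d ≤ u i
  · by_cases hv : ∀ i, 1 / d - nearRadius d ≤ v i
    · have hH := inv_sub_sum_sq_add_le hu1 hv1
      rcases not_and_or.mp huv with hne | hne
      · linarith [tiltedMean_lt_of_near hd hδ hδd hα.1 hu1 hu hne,
          tiltedMean_le_of_near hd hδ hδd hα.1 hv1 hv]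
      · linarith [tiltedMean_le_of_near hd hδ hδd hα.1 hu1 hu,
          tiltedMean_lt_of_near hd hδ hδd hα.1 hv1 hv hne]
    · obtain ⟨j, hj⟩ := not_forall.mp hv
      exact tiltedMean_add_lt_of_far hd hδ hδρ hρ hα hu0 hu1 hv0 hv1 hS (not_le.mp hj)
  · obtain ⟨j, hj⟩ := not_forall.mp hu
    have hcomm : ∑ i, v i * u i = ∑ i, u i * v i := by simp only [mul_comm]
    rw [add_comm, ← hcomm]
    exact tiltedMean_add_lt_of_far hd hδ hδρ hρ hα hv0 hv1 hu0 hu1 (hcomm ▸ hS)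
      (not_le.mp hj)

lemma dHdt_uniform [NeZero d] (hδ : 0 < δ) :
    dHdt d δ α (fun _ => 1 / (d : ℝ)) (fun _ => 1 / (d : ℝ)) = 0 := by
  have hd : (d : ℝ) ≠ 0 := Nat.cast_ne_zero.mpr (NeZero.ne d)
  rw [dHdt_eq_tiltedMean, tiltedMean_const hδ, sum_const, card_univ, Fintype.card_fin,
    nsmul_eq_mul]
  field_simp
  ring

end Main

/-- Lemma `derivativenegative`: for every `d ≥ 3` there is `α₀ > 0` such that
for `α > α₀` and `δ > 0` with `2 d^{1/(α+1)} δ ≤ 1/d`, for every `(u,v) ∈ D` with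
`∑ u_i v_i ≥ (3/2) d^{1/(α+1)} δ` one has `dH/dt ≤ 0`, with equality iff `u = v = (1/d,…,1/d)`. -/
theorem stmt_4 (d : ℕ) (hd : 3 ≤ d) :
    ∃ α₀ : ℝ, 0 < α₀ ∧ ∀ α : ℝ, α₀ < α → ∀ δ : ℝ, 0 < δ →
      2 * (d : ℝ) ^ ((1 : ℝ) / (α + 1)) * δ ≤ 1 / d →
      ∀ u v : Fin d → ℝ,
        (∀ i, 0 ≤ u i) → ∑ i, u i = 1 → (∀ i, 0 ≤ v i) → ∑ i, v i = 1 →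
        (3 / 2) * (d : ℝ) ^ ((1 : ℝ) / (α + 1)) * δ ≤ ∑ i, u i * v i →
        (dHdt d δ α u v ≤ 0 ∧
          (dHdt d δ α u v = 0 ↔
            (u = fun _ => 1 / (d : ℝ)) ∧ (v = fun _ => 1 / (d : ℝ)))) := by
  have : NeZero d := ⟨by omega⟩
  obtain ⟨α₁, hα₁⟩ := eventually_atTop.mp (eventually_isLargeExponent (d := d) (by omega))
  refine ⟨max α₁ 1, by positivity, fun α hα δ hδ hδd u v hu0 hu1 hv0 hv1 hS => ?_⟩
  have hα0 : 0 < α + 1 := by linarith [le_max_right α₁ 1]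
  set ρ := (d : ℝ) ^ ((1 : ℝ) / (α + 1)) * δ
  have hδρ : δ ≤ ρ := le_mul_of_one_le_left hδ.le
    (one_le_rpow (by exact_mod_cast (by omega : 1 ≤ d)) (by positivity))
  have hρd : ρ ≤ 1 / (2 * d) := by
    have : (1 : ℝ) / (2 * d) = 1 / d / 2 := by ring
    linarith
  by_cases huv : (u = fun _ => 1 / (d : ℝ)) ∧ (v = fun _ => 1 / (d : ℝ))
  · have h0 : dHdt d δ α u v = 0 := by
      rw [huv.1, huv.2]
      exact dHdt_uniform hδ
    exact ⟨h0.le, iff_of_true h0 huv⟩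
  · have hlt := dHdt_neg hd hδ hδρ hρd (hα₁ α ((le_max_left α₁ 1).trans hα.le))
      hu0 hu1 hv0 hv1 (by linarith) huv
    exact ⟨hlt.le, iff_of_false hlt.ne huv⟩
end

section
/- Let d ≥ 2, δ > 0 with δ < 1/(2d), and α > 0. There exist a neighborhood 𝒩 of (U,U) in D (U = (1/d,…,1/d)) and a constant c > 0 such that for all n and almost every ω with z(n)(ω) ∈ 𝒩, and for every vector θ ∈ ℝ^{2d} with Euclidean norm 1 satisfying ∑_{k=1}^d θ_k = 0 and ∑_{k=d+1}^{2d} θ_k = 0, one has E[max(ε(n)·θ, 0) | 𝔉_n](ω) ≥ c/(n+1+d). -/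
/-!
Let `p = π(y(n))` and `q = π(x(n))`, so that `(X_{n+1}, Y_{n+1})` has conditional law `p ⊗ q`, and
`(n + 1 + d) ε(n)·θ = Z := θ₁(X_{n+1}) + θ₂(Y_{n+1}) - m` with `m = A + B`,
`A = ∑ pₖ θ₁ₖ`, `B = ∑ qₖ θ₂ₖ`.
Conditionally on `𝔉_n`, `Z` is centred, bounded by `4`, and has variance
`∑ pᵢ (θ₁ᵢ - A)² + ∑ qⱼ (θ₂ⱼ - B)² ≥ c (‖θ₁‖² + ‖θ₂‖²) = c` as soon as all `pᵢ, qⱼ ≥ c`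
(the zero-sum condition on `θ` makes `∑ (θᵢ - a)²` minimal at `a = 0`).
For a centred variable bounded by `K`, `E[Z⁺] = E|Z| / 2 ≥ E[Z²] / (2K)`, so `E[Z⁺] ≥ c / 8`.
Finally `π` maps every constant vector, in particular `U`, to `U`, so by continuity
`π ≥ 1 / (2d)` near `U`.
-/

open MeasureTheory Filter Finset

/-- The empirical occupation measure: `occ d X n ω i = (1 + #{1 ≤ k ≤ n : X_k(ω) = i})/(n+d)`. -/
noncomputable def occ {Ω : Type} (d : ℕ) (X : ℕ → Ω → Fin d) (n : ℕ) (ω : Ω) (i : Fin d) : ℝ :=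
  (1 + ((Finset.Icc 1 n).filter (fun k => X k ω = i)).card) / (n + d)

/-- The inner product `ε(n)·θ` of the noise `ε(n)` (with coordinates
`ε_i(n) = (1_{X_{n+1}=i} − π_i(y(n)))/(n+1+d)` and
`ε_{d+i}(n) = (1_{Y_{n+1}=i} − π_i(x(n)))/(n+1+d)`) with `θ = (θ¹, θ²) ∈ ℝ^{2d}`. -/
noncomputable def epsDot {Ω : Type} (d : ℕ) (δ α : ℝ) (X Y : ℕ → Ω → Fin d) (n : ℕ)
    (θ : (Fin d → ℝ) × (Fin d → ℝ)) (ω : Ω) : ℝ :=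
  (∑ i, ((if X (n + 1) ω = i then (1 : ℝ) else 0) - piv d δ α (occ d Y n ω) i) / (n + 1 + d) * θ.1 i) +
  (∑ i, ((if Y (n + 1) ω = i then (1 : ℝ) else 0) - piv d δ α (occ d X n ω) i) / (n + 1 + d) * θ.2 i)

open scoped Topology

section Deterministic

variable {ι κ : Type*} [Fintype ι] [Fintype κ]

theorem sum_mul_sq_le_mul_sum_mul_max_zero {w Z : ι → ℝ} {K : ℝ} (hw : ∀ i, 0 ≤ w i)
    (hZ : ∀ i, |Z i| ≤ K) (hmean : ∑ i, w i * Z i = 0) :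
    ∑ i, w i * Z i ^ 2 ≤ 2 * K * ∑ i, w i * max (Z i) 0 := by
  have hpt : ∀ i, w i * Z i ^ 2 ≤ 2 * K * (w i * max (Z i) 0) - K * (w i * Z i) := by
    intro i
    -- `Z² ≤ K |Z|` and `|Z| = 2 max(Z, 0) - Z`
    have hsq : Z i ^ 2 ≤ K * (2 * max (Z i) 0 - Z i) := by
      have := abs_le.mp (hZ i)
      rcases le_total 0 (Z i) with h | h
      · rw [max_eq_left h]; nlinarith
      · rw [max_eq_right h]; nlinarith
    nlinarith [mul_le_mul_of_nonneg_left hsq (hw i)]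
  calc ∑ i, w i * Z i ^ 2
      ≤ ∑ i, (2 * K * (w i * max (Z i) 0) - K * (w i * Z i)) := sum_le_sum fun i _ => hpt i
    _ = 2 * K * ∑ i, w i * max (Z i) 0 := by
      rw [sum_sub_distrib, ← mul_sum, ← mul_sum, hmean, mul_zero, sub_zero]

theorem sum_sum_mul_mul_add_sq {p : ι → ℝ} {q : κ → ℝ} {a : ι → ℝ} {b : κ → ℝ}
    (hp : ∑ i, p i = 1) (hq : ∑ j, q j = 1) (ha : ∑ i, p i * a i = 0) (hb : ∑ j, q j * b j = 0) :
    ∑ i, ∑ j, p i * q j * (a i + b j) ^ 2 = ∑ i, p i * a i ^ 2 + ∑ j, q j * b j ^ 2 := by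
  have h : ∀ i j, p i * q j * (a i + b j) ^ 2
      = p i * a i ^ 2 * q j + p i * (q j * b j ^ 2) + 2 * (p i * a i) * (q j * b j) := by
    intros; ring
  simp only [h, sum_add_distrib, ← mul_sum, ← sum_mul, hq, hb, ha, hp]
  ring

theorem sum_sum_mul_mul_add {p : ι → ℝ} {q : κ → ℝ} {a : ι → ℝ} {b : κ → ℝ}
    (hp : ∑ i, p i = 1) (hq : ∑ j, q j = 1) (ha : ∑ i, p i * a i = 0) (hb : ∑ j, q j * b j = 0) :
    ∑ i, ∑ j, p i * q j * (a i + b j) = 0 := by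
  have h : ∀ i j, p i * q j * (a i + b j) = p i * a i * q j + p i * (q j * b j) := by
    intros; ring
  simp only [h, sum_add_distrib, ← mul_sum, ← sum_mul, hq, hb, ha, hp]
  ring

theorem sum_sq_le_sum_sub_sq {θ : ι → ℝ} (hθ : ∑ i, θ i = 0) (a : ℝ) :
    ∑ i, θ i ^ 2 ≤ ∑ i, (θ i - a) ^ 2 := by
  have h : ∀ i, (θ i - a) ^ 2 = θ i ^ 2 - 2 * a * θ i + a ^ 2 := fun i => by ring
  simp only [h, sum_add_distrib, sum_sub_distrib, ← mul_sum, hθ, sum_const]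
  nlinarith [sq_nonneg a, nsmul_nonneg (sq_nonneg a) #(univ : Finset ι)]

theorem mul_sum_sq_le_sum_mul_sub_sq {p θ : ι → ℝ} {c : ℝ} (hc : 0 ≤ c) (hp : ∀ i, c ≤ p i)
    (hθ : ∑ i, θ i = 0) (a : ℝ) :
    c * ∑ i, θ i ^ 2 ≤ ∑ i, p i * (θ i - a) ^ 2 :=
  calc c * ∑ i, θ i ^ 2 ≤ c * ∑ i, (θ i - a) ^ 2 :=
        mul_le_mul_of_nonneg_left (sum_sq_le_sum_sub_sq hθ a) hc
    _ = ∑ i, c * (θ i - a) ^ 2 := mul_sum _ _ _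
    _ ≤ ∑ i, p i * (θ i - a) ^ 2 :=
        sum_le_sum fun i _ => mul_le_mul_of_nonneg_right (hp i) (sq_nonneg _)

theorem abs_le_one_of_sum_sq_le_one {θ : ι → ℝ} (hθ : ∑ i, θ i ^ 2 ≤ 1) (i : ι) : |θ i| ≤ 1 :=
  (sq_le_one_iff_abs_le_one _).mp <|
    (single_le_sum (fun j _ => sq_nonneg (θ j)) (mem_univ i)).trans hθ

theorem abs_sum_mul_le_one {p θ : ι → ℝ} (hp0 : ∀ i, 0 ≤ p i) (hp : ∑ i, p i = 1)
    (hθ : ∀ i, |θ i| ≤ 1) : |∑ i, p i * θ i| ≤ 1 :=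
  calc |∑ i, p i * θ i| ≤ ∑ i, |p i * θ i| := abs_sum_le_sum_abs _ _
    _ ≤ ∑ i, p i := sum_le_sum fun i _ => by
        rw [abs_mul, abs_of_nonneg (hp0 i)]; exact mul_le_of_le_one_right (hp0 i) (hθ i)
    _ = 1 := hp

theorem sum_mul_sub_sum_mul_self {p : ι → ℝ} (hp : ∑ i, p i = 1) (θ : ι → ℝ) :
    ∑ i, p i * (θ i - ∑ k, p k * θ k) = 0 := by
  simp only [mul_sub, sum_sub_distrib, ← sum_mul, hp, one_mul, sub_self]

theorem le_sum_sum_mul_max_sub_mean {p : ι → ℝ} {q : κ → ℝ} {θ₁ : ι → ℝ} {θ₂ : κ → ℝ} {c : ℝ}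
    (hc : 0 ≤ c) (hpc : ∀ i, c ≤ p i) (hqc : ∀ j, c ≤ q j)
    (hp : ∑ i, p i = 1) (hq : ∑ j, q j = 1) (hθ : ∑ i, θ₁ i ^ 2 + ∑ j, θ₂ j ^ 2 = 1)
    (hθ₁ : ∑ i, θ₁ i = 0) (hθ₂ : ∑ j, θ₂ j = 0) :
    c / 8 ≤ ∑ i, ∑ j, p i * q j *
      max (θ₁ i + θ₂ j - (∑ k, p k * θ₁ k + ∑ k, q k * θ₂ k)) 0 := by
  set A := ∑ k, p k * θ₁ k
  set B := ∑ k, q k * θ₂ k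
  have hp0 : ∀ i, 0 ≤ p i := fun i => hc.trans (hpc i)
  have hq0 : ∀ j, 0 ≤ q j := fun j => hc.trans (hqc j)
  have hθ₁le : ∀ i, |θ₁ i| ≤ 1 := abs_le_one_of_sum_sq_le_one <| by
    linarith [sum_nonneg fun j (_ : j ∈ univ) => sq_nonneg (θ₂ j)]
  have hθ₂le : ∀ j, |θ₂ j| ≤ 1 := abs_le_one_of_sum_sq_le_one <| by
    linarith [sum_nonneg fun i (_ : i ∈ univ) => sq_nonneg (θ₁ i)]
  have hA := abs_sum_mul_le_one hp0 hp hθ₁le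
  have hB := abs_sum_mul_le_one hq0 hq hθ₂le
  have hA0 : ∑ i, p i * (θ₁ i - A) = 0 := sum_mul_sub_sum_mul_self hp θ₁
  have hB0 : ∑ j, q j * (θ₂ j - B) = 0 := sum_mul_sub_sum_mul_self hq θ₂
  have hsplit : ∀ i j, θ₁ i + θ₂ j - (A + B) = (θ₁ i - A) + (θ₂ j - B) := fun i j => by ring
  simp only [hsplit]
  have hvar : c ≤ ∑ i, ∑ j, p i * q j * ((θ₁ i - A) + (θ₂ j - B)) ^ 2 := by
    rw [sum_sum_mul_mul_add_sq hp hq hA0 hB0]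
    nlinarith [mul_sum_sq_le_sum_mul_sub_sq hc hpc hθ₁ A,
      mul_sum_sq_le_sum_mul_sub_sq hc hqc hθ₂ B]
  have key := sum_mul_sq_le_mul_sum_mul_max_zero (w := fun x : ι × κ => p x.1 * q x.2)
    (Z := fun x => (θ₁ x.1 - A) + (θ₂ x.2 - B)) (K := 4) (fun x => mul_nonneg (hp0 _) (hq0 _))
    (fun x => by
      have := abs_le.mp (hθ₁le x.1); have := abs_le.mp (hθ₂le x.2)
      have := abs_le.mp hA; have := abs_le.mp hB
      rw [abs_le]; constructor <;> linarith)
    (by rw [Fintype.sum_prod_type]; exact sum_sum_mul_mul_add hp hq hA0 hB0)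
  simp only [Fintype.sum_prod_type] at key
  linarith

end Deterministic

theorem condExp_comp_eq_sum {Ω ι : Type*} [Fintype ι] [DecidableEq ι] [MeasurableSpace ι]
    [MeasurableSingletonClass ι] {m mΩ : MeasurableSpace Ω} {μ : Measure Ω} [IsFiniteMeasure μ]
    {U : Ω → ι} (hU : Measurable U) {g r : ι → Ω → ℝ} (hgm : ∀ i, StronglyMeasurable[m] (g i))
    (hgi : ∀ i, Integrable (g i) μ)
    (hr : ∀ i, μ[fun ω => if U ω = i then (1 : ℝ) else 0 | m] =ᵐ[μ] r i) :
    μ[fun ω => g (U ω) ω | m] =ᵐ[μ] fun ω => ∑ i, g i ω * r i ω := by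
  have hU_set : ∀ i, MeasurableSet {ω | U ω = i} := fun i => hU (measurableSet_singleton i)
  have hind : ∀ i, (fun ω => if U ω = i then (1 : ℝ) else 0) = {ω | U ω = i}.indicator 1 :=
    fun i => funext fun ω => by simp [Set.indicator_apply]
  have hind_int : ∀ i, Integrable (fun ω => if U ω = i then (1 : ℝ) else 0) μ := fun i => by
    rw [hind]; exact (integrable_const 1).indicator (hU_set i)
  have hterm_int : ∀ i, Integrable (g i * fun ω => if U ω = i then (1 : ℝ) else 0) μ :=
    fun i => by
      have : (g i * fun ω => if U ω = i then (1 : ℝ) else 0) = {ω | U ω = i}.indicator (g i) := by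
        funext ω; simp [Set.indicator_apply]
      rw [this]; exact (hgi i).indicator (hU_set i)
  have hdecomp : (fun ω => g (U ω) ω)
      = ∑ i, g i * fun ω => if U ω = i then (1 : ℝ) else 0 := by
    funext ω; simp
  rw [hdecomp]
  filter_upwards [condExp_finsetSum (fun i _ => hterm_int i) m,
    ae_all_iff.mpr fun i => (condExp_mul_of_stronglyMeasurable_left (hgm i) (hterm_int i)
      (hind_int i)).trans (EventuallyEq.mul EventuallyEq.rfl (hr i))] with ω hsum hterm
  rw [hsum, Finset.sum_apply]
  exact Finset.sum_congr rfl fun i _ => hterm i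

section Piv

variable {d : ℕ} {δ : ℝ} (α : ℝ)

theorem sum_max_rpow_pos [NeZero d] (hδ : 0 < δ) (x : Fin d → ℝ) :
    0 < ∑ k, (max δ (x k)) ^ (-α) :=
  sum_pos (fun _ _ => Real.rpow_pos_of_pos (hδ.trans_le (le_max_left _ _)) _) univ_nonempty

theorem piv_pos [NeZero d] (hδ : 0 < δ) (x : Fin d → ℝ) (i : Fin d) : 0 < piv d δ α x i :=
  div_pos (Real.rpow_pos_of_pos (hδ.trans_le (le_max_left _ _)) _) (sum_max_rpow_pos α hδ x)

theorem sum_piv [NeZero d] (hδ : 0 < δ) (x : Fin d → ℝ) : ∑ i, piv d δ α x i = 1 := by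
  simp only [piv]
  rw [← sum_div, div_self (sum_max_rpow_pos α hδ x).ne']

theorem piv_le_one [NeZero d] (hδ : 0 < δ) (x : Fin d → ℝ) (i : Fin d) : piv d δ α x i ≤ 1 :=
  sum_piv α hδ x ▸ single_le_sum (fun j _ => (piv_pos α hδ x j).le) (mem_univ i)

theorem piv_const [NeZero d] (hδ : 0 < δ) (a : ℝ) (i : Fin d) :
    piv d δ α (fun _ => a) i = 1 / d := by
  have hpos : 0 < (max δ a) ^ (-α) := Real.rpow_pos_of_pos (hδ.trans_le (le_max_left _ _)) _
  simp only [piv, sum_const, card_univ, Fintype.card_fin, nsmul_eq_mul]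
  field_simp

theorem continuous_piv [NeZero d] (hδ : 0 < δ) (i : Fin d) :
    Continuous fun x : Fin d → ℝ => piv d δ α x i := by
  have hterm : ∀ k : Fin d, Continuous fun x : Fin d → ℝ => (max δ (x k)) ^ (-α) := fun k =>
    (continuous_const.max (continuous_apply k)).rpow_const fun x =>
      Or.inl (hδ.trans_le (le_max_left _ _)).ne'
  exact (hterm i).div (continuous_finsetSum _ fun k _ => hterm k)
    fun x => (sum_max_rpow_pos α hδ x).ne'

theorem setOf_le_piv_mem_nhds [NeZero d] (hδ : 0 < δ) {c : ℝ} (hc : c < 1 / d) (a : ℝ) :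
    {x : Fin d → ℝ | ∀ i, c ≤ piv d δ α x i} ∈ 𝓝 (fun _ => a) :=
  eventually_all.mpr fun i => (continuous_piv α hδ i).continuousAt.eventually
    (eventually_ge_nhds <| show c < piv d δ α (fun _ => a) i by rwa [piv_const α hδ])

end Piv

theorem measurable_occ {Ω : Type} {m : MeasurableSpace Ω} {d : ℕ} {X : ℕ → Ω → Fin d} {n : ℕ}
    (hX : ∀ k ≤ n, Measurable[m] (X k)) : Measurable[m] (occ d X n) := by
  refine measurable_pi_lambda _ fun i => ?_
  have hcard : ∀ ω, ((((Icc 1 n).filter fun k => X k ω = i).card : ℕ) : ℝ)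
      = ∑ k ∈ Icc 1 n, if X k ω = i then (1 : ℝ) else 0 := fun ω => by
    rw [card_filter]; push_cast; rfl
  simp only [occ, hcard]
  exact ((Finset.measurable_sum _ fun k hk => Measurable.ite
    (hX k (mem_Icc.mp hk).2 (measurableSet_singleton i)) measurable_const
    measurable_const).const_add 1).div_const _

theorem sum_ite_sub_div_mul {ι : Type*} [Fintype ι] [DecidableEq ι] (z : ι) (r θ : ι → ℝ)
    (N : ℝ) :
    ∑ i, ((if z = i then (1 : ℝ) else 0) - r i) / N * θ i = (θ z - ∑ i, r i * θ i) / N := by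
  simp only [sub_div, sub_mul, sum_sub_distrib, ite_div, zero_div, ite_mul, zero_mul,
    sum_ite_eq, mem_univ, if_true, div_mul_eq_mul_div, one_mul, ← sum_div]

theorem epsDot_eq {Ω : Type} {d : ℕ} (δ α : ℝ) (X Y : ℕ → Ω → Fin d) (n : ℕ)
    (θ : (Fin d → ℝ) × (Fin d → ℝ)) (ω : Ω) :
    epsDot d δ α X Y n θ ω = (θ.1 (X (n + 1) ω) + θ.2 (Y (n + 1) ω)
      - (∑ k, piv d δ α (occ d Y n ω) k * θ.1 k + ∑ k, piv d δ α (occ d X n ω) k * θ.2 k))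
        / (n + 1 + d) := by
  rw [epsDot, sum_ite_sub_div_mul, sum_ite_sub_div_mul]
  ring

theorem condExp_max_epsDot {Ω : Type} {mΩ : MeasurableSpace Ω} {P : Measure Ω}
    [IsFiniteMeasure P] {ℱ : Filtration ℕ mΩ} {d : ℕ} [NeZero d] {δ : ℝ} (hδ : 0 < δ) (α : ℝ)
    {X Y : ℕ → Ω → Fin d} (hX : ∀ n, Measurable[ℱ n] (X n)) (hY : ∀ n, Measurable[ℱ n] (Y n))
    (n : ℕ) (hcond : ∀ i j : Fin d,
      (P[(fun ω => (if X (n + 1) ω = i then (1 : ℝ) else 0) *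
            (if Y (n + 1) ω = j then (1 : ℝ) else 0)) | ℱ n]) =ᵐ[P]
        fun ω => piv d δ α (occ d Y n ω) i * piv d δ α (occ d X n ω) j)
    (θ : (Fin d → ℝ) × (Fin d → ℝ)) :
    P[fun ω => max (epsDot d δ α X Y n θ ω) 0 | ℱ n] =ᵐ[P] fun ω =>
      (∑ i, ∑ j, piv d δ α (occ d Y n ω) i * piv d δ α (occ d X n ω) j *
        max (θ.1 i + θ.2 j - (∑ k, piv d δ α (occ d Y n ω) k * θ.1 k
          + ∑ k, piv d δ α (occ d X n ω) k * θ.2 k)) 0) / (n + 1 + d) := by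
  set p := fun ω => piv d δ α (occ d Y n ω)
  set q := fun ω => piv d δ α (occ d X n ω)
  set g : Fin d × Fin d → Ω → ℝ := fun ij ω =>
    max (θ.1 ij.1 + θ.2 ij.2 - (∑ k, p ω k * θ.1 k + ∑ k, q ω k * θ.2 k)) 0 / (n + 1 + d)
  have hN : (0 : ℝ) < n + 1 + d := by positivity
  have hocc : ∀ Z : ℕ → Ω → Fin d, (∀ n, Measurable[ℱ n] (Z n)) →
      ∀ k, Measurable[ℱ n] fun ω => piv d δ α (occ d Z n ω) k := fun Z hZ k =>
    (continuous_piv α hδ k).measurable.comp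
      (measurable_occ fun j hj => (hZ j).mono (ℱ.mono hj) le_rfl)
  have hocc_int : ∀ Z : ℕ → Ω → Fin d, (∀ n, Measurable[ℱ n] (Z n)) →
      ∀ k, Integrable (fun ω => piv d δ α (occ d Z n ω) k) P := fun Z hZ k =>
    Integrable.of_bound ((hocc Z hZ k).mono (ℱ.le n) le_rfl).aestronglyMeasurable 1
      (ae_of_all _ fun ω => by
        rw [Real.norm_eq_abs, abs_of_pos (piv_pos α hδ _ k)]; exact piv_le_one α hδ _ k)
  have hgm : ∀ ij, Measurable[ℱ n] (g ij) := fun ij =>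
    ((measurable_const.sub ((Finset.measurable_sum _ fun k _ => (hocc Y hY k).mul_const _).add
      (Finset.measurable_sum _ fun k _ => (hocc X hX k).mul_const _))).max
        measurable_const).div_const _
  have hgi : ∀ ij, Integrable (g ij) P := fun ij =>
    ((integrable_const _).sub ((integrable_finsetSum _ fun k _ => (hocc_int Y hY k).mul_const _).add
      (integrable_finsetSum _ fun k _ => (hocc_int X hX k).mul_const _))).pos_part.div_const _
  have hU : Measurable fun ω => (X (n + 1) ω, Y (n + 1) ω) :=
    ((hX _).mono (ℱ.le _) le_rfl).prodMk ((hY _).mono (ℱ.le _) le_rfl)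
  have hr : ∀ ij : Fin d × Fin d,
      P[fun ω => if (X (n + 1) ω, Y (n + 1) ω) = ij then (1 : ℝ) else 0 | ℱ n] =ᵐ[P]
        fun ω => p ω ij.1 * q ω ij.2 := fun ⟨i, j⟩ => by
    simpa only [Prod.mk.injEq, ite_zero_mul_ite_zero, mul_one] using hcond i j
  have hmax : (fun ω => max (epsDot d δ α X Y n θ ω) 0)
      = fun ω => g (X (n + 1) ω, Y (n + 1) ω) ω := funext fun ω => by
    simp only [g, epsDot_eq]
    rw [← max_div_div_right hN.le, zero_div]
  rw [hmax]
  filter_upwards [condExp_comp_eq_sum hU (fun ij => (hgm ij).stronglyMeasurable) hgi hr]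
    with ω hω
  rw [hω, Fintype.sum_prod_type, sum_div]
  refine sum_congr rfl fun i _ => ?_
  rw [sum_div]
  refine sum_congr rfl fun j _ => ?_
  ring

theorem stmt_7_general (d : ℕ) (hd : 2 ≤ d) (δ : ℝ) (hδ : 0 < δ)
    (α : ℝ)
    (Ω : Type) (mΩ : MeasurableSpace Ω) (P : Measure Ω) (hP : IsProbabilityMeasure P)
    (ℱ : Filtration ℕ mΩ) (X Y : ℕ → Ω → Fin d)
    (hX : ∀ n, Measurable[ℱ n] (X n))
    (hY : ∀ n, Measurable[ℱ n] (Y n))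
    (hcond : ∀ (n : ℕ) (i j : Fin d),
      (P[(fun ω => (if X (n + 1) ω = i then (1 : ℝ) else 0) *
            (if Y (n + 1) ω = j then (1 : ℝ) else 0)) | ℱ n]) =ᵐ[P]
        fun ω => piv d δ α (occ d Y n ω) i * piv d δ α (occ d X n ω) j) :
    ∃ 𝒩 : Set ((Fin d → ℝ) × (Fin d → ℝ)),
      𝒩 ∈ nhdsWithin ((fun _ => 1 / (d : ℝ)), (fun _ => 1 / (d : ℝ)))
          {z : (Fin d → ℝ) × (Fin d → ℝ) |
            ((∀ i, 0 ≤ z.1 i) ∧ ∑ i, z.1 i = 1) ∧ (∀ i, 0 ≤ z.2 i) ∧ ∑ i, z.2 i = 1} ∧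
      ∃ c : ℝ, 0 < c ∧
        ∀ (n : ℕ) (θ : (Fin d → ℝ) × (Fin d → ℝ)),
          (∑ i, (θ.1 i) ^ 2) + (∑ i, (θ.2 i) ^ 2) = 1 →
          ∑ i, θ.1 i = 0 → ∑ i, θ.2 i = 0 →
          ∀ᵐ ω ∂P, ((occ d X n ω, occ d Y n ω) :
              (Fin d → ℝ) × (Fin d → ℝ)) ∈ 𝒩 →
            c / (n + 1 + d) ≤ (P[(fun ω' => max (epsDot d δ α X Y n θ ω') 0) | ℱ n]) ω := by
  have : NeZero d := ⟨by omega⟩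
  have hd0 : (0 : ℝ) < d := by positivity
  set S := {x : Fin d → ℝ | ∀ i, 1 / (2 * d) ≤ piv d δ α x i}
  have hS : S ∈ 𝓝 fun _ => 1 / (d : ℝ) :=
    setOf_le_piv_mem_nhds α hδ (one_div_lt_one_div_of_lt hd0 (by linarith)) _
  refine ⟨S ×ˢ S, mem_nhdsWithin_of_mem_nhds (prod_mem_nhds hS hS), 1 / (16 * d),
    by positivity, fun n θ hθ hθ₁ hθ₂ => ?_⟩
  filter_upwards [condExp_max_epsDot hδ α hX hY n (hcond n) θ] with ω hω ⟨hq, hp⟩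
  rw [hω]
  gcongr
  calc 1 / (16 * (d : ℝ)) = 1 / (2 * d) / 8 := by ring
    _ ≤ _ := le_sum_sum_mul_max_sub_mean (by positivity) hp hq (sum_piv α hδ _)
        (sum_piv α hδ _) hθ hθ₁ hθ₂

/-- Lemma `condition3`: for `d ≥ 2`, `0 < δ < 1/(2d)`, `α > 0`, there are a
neighborhood `𝒩` of `(U,U)` in `D` and `c > 0` such that for all `n`, a.e. `ω` with
`z(n)(ω) ∈ 𝒩`, and every Euclidean unit vector `θ` in the tangent space,
`E[max(ε(n)·θ, 0) | 𝔉_n](ω) ≥ c/(n+1+d)`. -/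
theorem stmt_7 (d : ℕ) (hd : 2 ≤ d) (δ : ℝ) (hδ : 0 < δ) (hδ' : δ < 1 / (2 * d))
    (α : ℝ) (hα : 0 < α)
    (Ω : Type) (mΩ : MeasurableSpace Ω) (P : Measure Ω) (hP : IsProbabilityMeasure P)
    (ℱ : Filtration ℕ mΩ) (X Y : ℕ → Ω → Fin d)
    (hX : ∀ n, Measurable[ℱ n] (X n))
    (hY : ∀ n, Measurable[ℱ n] (Y n))
    (hcond : ∀ (n : ℕ) (i j : Fin d),
      (P[(fun ω => (if X (n + 1) ω = i then (1 : ℝ) else 0) *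
            (if Y (n + 1) ω = j then (1 : ℝ) else 0)) | ℱ n]) =ᵐ[P]
        fun ω => piv d δ α (occ d Y n ω) i * piv d δ α (occ d X n ω) j) :
    ∃ 𝒩 : Set ((Fin d → ℝ) × (Fin d → ℝ)),
      𝒩 ∈ nhdsWithin ((fun _ => 1 / (d : ℝ)), (fun _ => 1 / (d : ℝ)))
          {z : (Fin d → ℝ) × (Fin d → ℝ) |
            ((∀ i, 0 ≤ z.1 i) ∧ ∑ i, z.1 i = 1) ∧ (∀ i, 0 ≤ z.2 i) ∧ ∑ i, z.2 i = 1} ∧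
      ∃ c : ℝ, 0 < c ∧
        ∀ (n : ℕ) (θ : (Fin d → ℝ) × (Fin d → ℝ)),
          (∑ i, (θ.1 i) ^ 2) + (∑ i, (θ.2 i) ^ 2) = 1 →
          ∑ i, θ.1 i = 0 → ∑ i, θ.2 i = 0 →
          ∀ᵐ ω ∂P, ((occ d X n ω, occ d Y n ω) :
              (Fin d → ℝ) × (Fin d → ℝ)) ∈ 𝒩 →
            c / (n + 1 + d) ≤ (P[(fun ω' => max (epsDot d δ α X Y n θ ω') 0) | ℱ n]) ω :=
  stmt_7_general d hd δ hδ α Ω mΩ P hP ℱ X Y hX hY hcond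
end

section
/- Let d ≥ 2 be an integer. Every vector θ = (θ_1, …, θ_{2d}) ∈ ℝ^{2d} with Euclidean norm 1 satisfying ∑_{k=1}^d θ_k = 0 and ∑_{k=d+1}^{2d} θ_k = 0 has a coordinate satisfying max_{1 ≤ k ≤ 2d} θ_k ≥ 1/((d−1)√(2d)). -/
open Finset

/-!
Let `M` be the largest coordinate of `θ`. In a block whose coordinates sum to zero, each
coordinate is minus the sum of the `d - 1` others, hence at least `-(d - 1) M`; as `d ≥ 2` it is
also at most `M ≤ (d - 1) M`. So every `|θ_k| ≤ (d - 1) M`, and `1 = ∑ θ_k² ≤ 2d (d - 1)² M²`.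
-/

section ZeroSum

variable {ι : Type*} [Fintype ι] {f : ι → ℝ} {M : ℝ}

theorem neg_card_sub_one_mul_le_of_sum_eq_zero (hf : ∀ j, f j ≤ M) (hsum : ∑ j, f j = 0)
    (i : ι) : -(((Fintype.card ι : ℝ) - 1) * M) ≤ f i := by
  have hgap : M - f i ≤ ∑ j, (M - f j) :=
    Finset.single_le_sum (f := fun j => M - f j) (fun j _ => sub_nonneg.2 (hf j))
      (Finset.mem_univ i)
  rw [Finset.sum_sub_distrib, hsum, Finset.sum_const, Finset.card_univ, nsmul_eq_mul] at hgap
  linarith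

theorem abs_le_card_sub_one_mul_of_sum_eq_zero (hcard : 2 ≤ Fintype.card ι)
    (hf : ∀ j, f j ≤ M) (hsum : ∑ j, f j = 0) (i : ι) :
    |f i| ≤ ((Fintype.card ι : ℝ) - 1) * M := by
  have hcard' : (2 : ℝ) ≤ Fintype.card ι := by exact_mod_cast hcard
  have hlow := neg_card_sub_one_mul_le_of_sum_eq_zero hf hsum i
  have hM : 0 ≤ M := by nlinarith [hf i]
  exact abs_le.2 ⟨hlow, (hf i).trans (by nlinarith)⟩

end ZeroSum

/-- Every unit vector `θ ∈ ℝ^{2d}` (Euclidean norm) in the tangent space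
`TD = {(u,v) : ∑ u_i = 0, ∑ v_i = 0}` has a coordinate `≥ 1/((d-1)√(2d))`. -/
theorem stmt_9 (d : ℕ) (hd : 2 ≤ d) (θ : Fin d ⊕ Fin d → ℝ)
    (hnorm : ∑ k, (θ k) ^ 2 = 1)
    (hsum1 : ∑ i : Fin d, θ (Sum.inl i) = 0)
    (hsum2 : ∑ i : Fin d, θ (Sum.inr i) = 0) :
    ∃ k, 1 / (((d : ℝ) - 1) * Real.sqrt (2 * d)) ≤ θ k := by
  have : Nonempty (Fin d) := ⟨⟨0, by omega⟩⟩
  obtain ⟨k₀, -, hk₀⟩ := Finset.exists_max_image univ θ univ_nonempty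
  have hmax (k) : θ k ≤ θ k₀ := hk₀ k (mem_univ k)
  set c := ((d : ℝ) - 1) * θ k₀
  have hbound : ∀ k, |θ k| ≤ c := by
    have hcard : 2 ≤ Fintype.card (Fin d) := by simpa using hd
    rintro (i | i)
    · simpa using abs_le_card_sub_one_mul_of_sum_eq_zero hcard (fun _ => hmax _) hsum1 i
    · simpa using abs_le_card_sub_one_mul_of_sum_eq_zero hcard (fun _ => hmax _) hsum2 i
  have hc : 0 ≤ c := (abs_nonneg _).trans (hbound k₀)
  have hsq : 1 ≤ (Real.sqrt (2 * d) * c) ^ 2 := by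
    calc (1 : ℝ) = ∑ k, θ k ^ 2 := hnorm.symm
      _ ≤ ∑ _k : Fin d ⊕ Fin d, c ^ 2 :=
        Finset.sum_le_sum fun k _ => sq_le_sq.2 ((hbound k).trans (le_abs_self c))
      _ = (Real.sqrt (2 * d) * c) ^ 2 := by
        rw [mul_pow (Real.sqrt _), Real.sq_sqrt (by positivity)]
        simp [two_mul, add_mul]
  have hprod : 1 ≤ Real.sqrt (2 * d) * c := by
    have h := (one_le_sq_iff_one_le_abs _).1 hsq
    rwa [abs_of_nonneg (by positivity)] at h
  have hd1 : (0 : ℝ) < d - 1 := by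
    have : (2 : ℝ) ≤ d := by exact_mod_cast hd
    linarith
  refine ⟨k₀, ?_⟩
  rw [div_le_iff₀ (by positivity)]
  linarith [show Real.sqrt (2 * d) * c = θ k₀ * ((d - 1) * Real.sqrt (2 * d)) by ring]
end

section
/- For every α > 0, every integer d ≥ 2, and all real numbers a_1, …, a_{d−1} ∈ (0,1], one has (1 + ∑_{i=1}^{d−1} a_i^α)/(1 + ∑_{i=1}^{d−1} a_i^{1+α}) < d^{1/(α+1)}. -/
/-!
Put `x = (1, a_1, …, a_{d-1})`. Hölder's inequality with the constant sequence `1` and exponents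
`α + 1`, `(α + 1)/α` gives `∑ x_i^α ≤ d^{1/(α+1)} N^{α/(α+1)}` with `N = ∑ x_i^{1+α}`, and
`N^{α/(α+1)} < N` because `N > 1`.
-/

open Finset

namespace Real

lemma holderConjugate_add_one_div (α : ℝ) (hα : 0 < α) :
    HolderConjugate (α + 1) ((α + 1) / α) := by
  rw [holderConjugate_iff]
  constructor
  · linarith
  · field_simp
    ring

lemma sum_rpow_le_card_rpow_mul_sum_rpow {ι : Type*} (s : Finset ι) {x : ι → ℝ}
    (hx : ∀ i ∈ s, 0 ≤ x i) {α : ℝ} (hα : 0 < α) :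
    ∑ i ∈ s, x i ^ α ≤ (#s : ℝ) ^ (1 / (α + 1)) * (∑ i ∈ s, x i ^ (1 + α)) ^ (α / (α + 1)) := by
  have holder := inner_le_Lp_mul_Lq_of_nonneg s (f := fun _ => 1) (g := fun i => x i ^ α)
    (holderConjugate_add_one_div α hα) (fun _ _ => zero_le_one)
    (fun i hi => rpow_nonneg (hx i hi) α)
  have hpow : ∀ i ∈ s, (x i ^ α) ^ ((α + 1) / α) = x i ^ (1 + α) := fun i hi => by
    rw [← rpow_mul (hx i hi)]
    congr 1
    field_simp
    ring
  have hexp : 1 / ((α + 1) / α) = α / (α + 1) := by field_simp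
  simpa only [one_mul, one_rpow, sum_const, nsmul_eq_mul, mul_one, sum_congr rfl hpow, hexp]
    using holder

lemma sum_rpow_div_sum_rpow_lt_card_rpow {ι : Type*} (s : Finset ι) {x : ι → ℝ}
    (hx : ∀ i ∈ s, 0 ≤ x i) {α : ℝ} (hα : 0 < α) (hN : 1 < ∑ i ∈ s, x i ^ (1 + α)) :
    (∑ i ∈ s, x i ^ α) / (∑ i ∈ s, x i ^ (1 + α)) < (#s : ℝ) ^ (1 / (α + 1)) := by
  set N := ∑ i ∈ s, x i ^ (1 + α)
  have hs : s.Nonempty := nonempty_of_sum_ne_zero (by linarith : N ≠ 0)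
  have hcard : 0 < (#s : ℝ) ^ (1 / (α + 1)) := rpow_pos_of_pos (by simpa using hs.card_pos) _
  have hNpow : N ^ (α / (α + 1)) < N :=
    rpow_lt_self_of_one_lt hN ((div_lt_one (by linarith)).2 (by linarith))
  rw [div_lt_iff₀ (by linarith)]
  calc ∑ i ∈ s, x i ^ α ≤ (#s : ℝ) ^ (1 / (α + 1)) * N ^ (α / (α + 1)) :=
        sum_rpow_le_card_rpow_mul_sum_rpow s hx hα
    _ < (#s : ℝ) ^ (1 / (α + 1)) * N := mul_lt_mul_of_pos_left hNpow hcard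

end Real

/-- for `α > 0`, `d ≥ 2` and `a_1, …, a_{d-1} ∈ (0,1]`,
`(1 + ∑ a_i^α)/(1 + ∑ a_i^{1+α}) < d^{1/(α+1)}`. -/
theorem stmt_11 (α : ℝ) (hα : 0 < α) (d : ℕ) (hd : 2 ≤ d)
    (a : Fin (d - 1) → ℝ) (ha : ∀ i, a i ∈ Set.Ioc (0 : ℝ) 1) :
    (1 + ∑ i, a i ^ α) / (1 + ∑ i, a i ^ (1 + α)) < (d : ℝ) ^ ((1 : ℝ) / (α + 1)) := by
  have hx : ∀ i ∈ univ, 0 ≤ (Fin.cons 1 a : Fin (d - 1 + 1) → ℝ) i := fun i _ =>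
    Fin.cases zero_le_one (fun j => (ha j).1.le) i
  have hpos : 0 < ∑ i, a i ^ (1 + α) :=
    sum_pos (fun i _ => Real.rpow_pos_of_pos (ha i).1 _) (univ_nonempty_iff.2 ⟨⟨0, by omega⟩⟩)
  have h := Real.sum_rpow_div_sum_rpow_lt_card_rpow univ hx hα
    (by simpa [Fin.sum_univ_succ] using hpos)
  simp only [Fin.sum_univ_succ, Fin.cons_zero, Fin.cons_succ, Real.one_rpow, card_univ,
    Fintype.card_fin] at h
  rwa [Nat.sub_add_cancel (by omega : 1 ≤ d)] at h
end

section
/- For every integer d ≥ 2 there exists α(d) > 0 such that for all α > α(d) and every u ∈ ℝ^d with u_i > 0 for all i and ∑_{i=1}^d u_i = 1, the inequality 2 min_{1≤i≤d} u_i − d (min_{1≤i≤d} u_i)² ≥ (∑_{i=1}^d u_i^{−α})/(∑_{i=1}^d u_i^{−(1+α)}) holds, and equality holds if and only if u_i = 1/d for all i. -/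
/-!
Put `β = 1 + α`, `m = min u` and `c = 2m - dm²`. Since `∑ u_i^(-α) - c ∑ u_i^(-β)` equals
`∑ g(u_i)` with `g(x) = x^(-β) (x - c)`, the theorem is the sign of this sum. Rescaling so that
the minimum is `1` turns `c` into `1 + δ` with `δ = 1 - dm`, and the minimal coordinate contributes
exactly `-δ`. The other `d - 1` coordinates are bounded through a tangent line of `g`, which lies
above `g` on `(0, ∞)` at every point between `c` and the maximiser `z` of `g`: the tangent at their
mean `y` when `y ≤ z` (Bernoulli's inequality then gives `(d - 1) g(y) < δ` once `β > d - 1`), and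
the horizontal tangent at `z` otherwise, where `y > z` forces `βδ` to be of size `√d`.
-/

open Finset

lemma Real.rpow_tangent_le {x y β : ℝ} (hx : 0 < x) (hy : 0 < y) (hβ : 1 ≤ β) :
    y ^ (β - 1) * (y + β * (x - y)) ≤ x ^ β := by
  have h := one_add_mul_self_le_rpow_one_add
    (show (-1 : ℝ) ≤ (x - y) / y by rw [le_div_iff₀ hy]; linarith) hβ
  rw [show 1 + (x - y) / y = x / y by field_simp; ring, Real.div_rpow hx.le hy.le,
    le_div_iff₀ (by positivity)] at h
  calc y ^ (β - 1) * (y + β * (x - y)) = (1 + β * ((x - y) / y)) * (y ^ (β - 1) * y) := by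
        field_simp
    _ = (1 + β * ((x - y) / y)) * y ^ β := by rw [← Real.rpow_add_one hy.ne', sub_add_cancel]
    _ ≤ x ^ β := h

noncomputable def weightedGap (β c x : ℝ) : ℝ := x ^ (-β) * (x - c)

lemma weightedGap_le_tangent {β c x y : ℝ} (hβ : 1 ≤ β) (hx : 0 < x) (hy : 0 < y) (hcy : c ≤ y)
    (hκ : (β - 1) * y ≤ β * c) :
    weightedGap β c x ≤ weightedGap β c y + (β * c - (β - 1) * y) * y ^ (-β - 1) * (x - y) := by
  set κ := β * c - (β - 1) * y
  set A := (y - c) * y + κ * (x - y)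
  set P := y ^ (β - 1)
  have hP : 0 < P := by positivity
  have hxβ : 0 < x ^ β := by positivity
  have hyβ : y ^ β = P * y := by rw [← Real.rpow_add_one hy.ne', sub_add_cancel]
  have hrhs : weightedGap β c y + κ * y ^ (-β - 1) * (x - y) = A / (P * y ^ 2) := by
    rw [weightedGap, show -β - 1 = -(β + 1) by ring, Real.rpow_neg hy.le, Real.rpow_neg hy.le,
      Real.rpow_add_one hy.ne', hyβ]
    field_simp
    ring
  rw [hrhs, weightedGap, Real.rpow_neg hx.le, ← div_eq_inv_mul,
    div_le_div_iff₀ hxβ (by positivity)]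
  have hbern := Real.rpow_tangent_le hx hy hβ
  rcases le_or_gt 0 A with hA | hA
  · -- `A * (y + β (x - y))` exceeds `(x - c) y²` by the square `β κ (x - y)²`
    have hsq : 0 ≤ β * κ * (x - y) ^ 2 := by
      have : 0 ≤ κ := by simp only [κ]; linarith
      positivity
    calc (x - c) * (P * y ^ 2) ≤ P * (A * (y + β * (x - y))) := by
          nlinarith [mul_le_mul_of_nonneg_left hsq hP.le]
      _ = A * (P * (y + β * (x - y))) := by ring
      _ ≤ A * x ^ β := mul_le_mul_of_nonneg_left hbern hA
  · have hxc : x < c := by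
      by_contra! h
      have : 0 ≤ κ := by simp only [κ]; linarith
      nlinarith [mul_nonneg this (sub_nonneg.2 h),
        mul_nonneg (zero_le_one.trans hβ) (sq_nonneg (y - c))]
    have hxy : x ≤ y := by linarith
    have hxβy : x ^ β ≤ P * y := hyβ ▸ Real.rpow_le_rpow hx.le hxy (by linarith)
    have hκy : κ ≤ y := by simp only [κ]; nlinarith
    nlinarith [mul_le_mul_of_nonneg_left hxβy (neg_nonneg.2 hA.le),
      mul_nonneg (mul_nonneg hP.le hy.le) (mul_nonneg (sub_nonneg.2 hxy) (sub_nonneg.2 hκy))]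

lemma isMaxOn_weightedGap {β c z : ℝ} (hβ : 1 < β) (hz : 0 < z) (hcrit : (β - 1) * z = β * c) :
    IsMaxOn (weightedGap β c) (Set.Ioi 0) z := by
  intro x hx
  have h := weightedGap_le_tangent hβ.le hx hz (by nlinarith) hcrit.le
  rwa [hcrit, sub_self, zero_mul, zero_mul, add_zero] at h

lemma Finset.sum_le_card_mul_of_le_affine {ι : Type*} (s : Finset ι) (g x : ι → ℝ) {a b : ℝ}
    (h : ∀ i ∈ s, g i ≤ a + b * (x i - (∑ j ∈ s, x j) / #s)) : ∑ i ∈ s, g i ≤ #s * a := by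
  rcases s.eq_empty_or_nonempty with rfl | hs
  · simp
  have hcard : (#s : ℝ) ≠ 0 := by exact_mod_cast hs.card_pos.ne'
  calc ∑ i ∈ s, g i ≤ ∑ i ∈ s, (a + b * (x i - (∑ j ∈ s, x j) / #s)) := sum_le_sum h
    _ = #s * a := by
      rw [sum_add_distrib, ← mul_sum, sum_sub_distrib, sum_const, sum_const, nsmul_eq_mul,
        nsmul_eq_mul, mul_div_cancel₀ _ hcard, sub_self, mul_zero, add_zero]

lemma card_mul_weightedGap_mean_lt {n S β : ℝ} (hn : 1 ≤ n) (hnS : n < S) (hβ : n < β) :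
    n * weightedGap β (1 + (S - n) / (S + 1)) (S / n) < (S - n) / (S + 1) := by
  set δ := (S - n) / (S + 1)
  have hn0 : 0 < n := by linarith
  have hS : 0 < S := by linarith
  have hδ : 0 < δ := div_pos (by linarith) (by linarith)
  have hyβ : 0 < (S / n) ^ β := by positivity
  have hbern : 1 + β * ((S - n) / n) ≤ (S / n) ^ β := by
    simpa [sub_div, div_self hn0.ne'] using one_add_mul_self_le_rpow_one_add (s := (S - n) / n)
      (by rw [le_div_iff₀ hn0]; linarith) (by linarith : 1 ≤ β)
  have hgrowth : S - n < β * ((S - n) / n) := by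
    rw [mul_div_assoc', lt_div_iff₀ hn0]; nlinarith
  have hnum : n * (S / n - (1 + δ)) = δ * (1 + (S - n)) := by
    simp only [δ]; field_simp; ring
  rw [weightedGap, Real.rpow_neg (by positivity), ← mul_assoc, mul_comm n, mul_assoc, hnum,
    inv_mul_lt_iff₀ hyβ, mul_comm _ δ]
  exact mul_lt_mul_of_pos_left (by linarith) hδ

lemma card_mul_weightedGap_crit_lt {n S β z : ℝ} (hn : 1 ≤ n) (hnS : n < S) (hβ : n + 2 ≤ β)
    (hz : (β - 1) * z = β * (1 + (S - n) / (S + 1))) (hzy : z < S / n) :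
    n * weightedGap β (1 + (S - n) / (S + 1)) z < (S - n) / (S + 1) := by
  set δ := (S - n) / (S + 1)
  set ρ := β * δ
  have hn0 : 0 < n := by linarith
  have hδ : 0 < δ := div_pos (by linarith) (by linarith)
  have hρ : 0 < ρ := mul_pos (by linarith) hδ
  have hρS : ρ * (S + 1) = β * (S - n) := by
    simp only [ρ, δ]; rw [mul_assoc, div_mul_cancel₀ _ (by linarith)]
  have hz1 : (β - 1) * (z - 1) = 1 + ρ := by linear_combination hz
  have hz0 : 1 < z := by nlinarith
  have hbern : 2 + ρ < z ^ (β - 1) := by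
    have := one_add_mul_self_lt_rpow_one_add (s := z - 1) (by linarith) (by linarith)
      (by linarith : 1 < β - 1)
    rwa [add_sub_cancel, hz1, ← add_assoc, one_add_one_eq_two] at this
  have hρn : n ≤ ρ * (2 + ρ) := by
    have h1 : n * (1 + ρ) < (β - 1) * (S - n) := by
      rw [lt_div_iff₀ hn0] at hzy
      nlinarith
    by_contra! h
    nlinarith
  have hzpow : z ^ β = z ^ (β - 1) * z := by rw [← Real.rpow_add_one (by linarith), sub_add_cancel]
  have hval : n * weightedGap β (1 + δ) z = n / (β * z ^ (β - 1)) := by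
    have hβ0 : β ≠ 0 := by linarith
    have hP : z ^ (β - 1) ≠ 0 := by positivity
    have hzD : z - (1 + δ) = z / β := by rw [eq_div_iff hβ0]; linear_combination hz
    rw [weightedGap, Real.rpow_neg (by linarith), hzpow, hzD]
    field_simp
  have hP : 0 < z ^ (β - 1) := by positivity
  rw [hval, div_lt_iff₀ (mul_pos (by linarith) hP)]
  nlinarith

lemma sum_weightedGap_lt {ι : Type*} (s : Finset ι) (x : ι → ℝ) (hx : ∀ i ∈ s, 0 < x i) {β : ℝ}
    (hβ : #s + 2 ≤ β) (hs : #s < ∑ i ∈ s, x i) :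
    ∑ i ∈ s, weightedGap β (1 + (∑ i ∈ s, x i - #s) / (∑ i ∈ s, x i + 1)) (x i) <
      (∑ i ∈ s, x i - #s) / (∑ i ∈ s, x i + 1) := by
  set n : ℝ := (#s : ℝ)
  set S := ∑ i ∈ s, x i
  set δ := (S - n) / (S + 1)
  have hn : 1 ≤ n := by
    rcases s.eq_empty_or_nonempty with rfl | hne
    · simp [n, S] at hs
    · exact Nat.one_le_cast.2 hne.card_pos
  have hDy : 1 + δ ≤ S / n := by
    rw [le_div_iff₀ (by linarith)]
    have : δ * n ≤ S - n := by
      rw [div_mul_eq_mul_div, div_le_iff₀ (by linarith)]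
      nlinarith
    linarith
  have hy : 0 < S / n := div_pos (by linarith) (by linarith)
  have hδ : 0 ≤ δ := div_nonneg (by linarith) (by linarith)
  by_cases hyz : (β - 1) * (S / n) ≤ β * (1 + δ)
  · calc _ ≤ n * weightedGap β (1 + δ) (S / n) :=
          sum_le_card_mul_of_le_affine s _ x fun i hi =>
            weightedGap_le_tangent (by linarith) (hx i hi) hy hDy hyz
      _ < δ := card_mul_weightedGap_mean_lt hn hs (by linarith)
  · have hβ1 : 0 < β - 1 := by linarith
    set z := β * (1 + δ) / (β - 1)
    have hz : (β - 1) * z = β * (1 + δ) := mul_div_cancel₀ _ hβ1.ne'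
    have hz0 : 0 < z := div_pos (mul_pos (by linarith) (by linarith)) hβ1
    calc _ ≤ n * weightedGap β (1 + δ) z := by
          simpa using sum_le_card_nsmul s (fun i => weightedGap β (1 + δ) (x i))
            (weightedGap β (1 + δ) z) fun i hi => isMaxOn_weightedGap (by linarith) hz0 hz (hx i hi)
      _ < δ := card_mul_weightedGap_crit_lt hn hs hβ hz (by nlinarith)

lemma sum_weightedGap_neg {ι : Type*} [Fintype ι] (v : ι → ℝ) (hv : ∀ i, 0 < v i) {i₀ : ι}
    (hi₀ : v i₀ = 1) {β : ℝ} (hβ : Fintype.card ι + 1 ≤ β) (hT : Fintype.card ι < ∑ i, v i) :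
    ∑ i, weightedGap β (2 - Fintype.card ι / ∑ i, v i) (v i) < 0 := by
  classical
  set s := univ.erase i₀
  have hcard : (#s : ℝ) + 1 = Fintype.card ι := by
    rw [card_erase_of_mem (mem_univ i₀), card_univ,
      Nat.cast_sub (Fintype.card_pos_iff.2 ⟨i₀⟩), Nat.cast_one, sub_add_cancel]
  have hS : ∑ i ∈ s, v i + 1 = ∑ i, v i := by
    rw [← add_sum_erase _ _ (mem_univ i₀), hi₀, add_comm]
  have hD : 2 - Fintype.card ι / ∑ i, v i =
      1 + (∑ i ∈ s, v i - #s) / (∑ i ∈ s, v i + 1) := by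
    have : 0 < ∑ i ∈ s, v i + 1 := by linarith
    rw [← hcard, ← hS]
    field_simp
    ring
  have hrest := sum_weightedGap_lt s v (fun i _ => hv i) (β := β) (by linarith) (by linarith)
  rw [← add_sum_erase _ _ (mem_univ i₀), hD, hi₀, weightedGap]
  simp only [Real.one_rpow, one_mul]
  linarith

lemma weightedGap_mul {β c x m : ℝ} (hm : 0 < m) (hx : 0 < x) :
    weightedGap β (m * c) (m * x) = m ^ (1 - β) * weightedGap β c x := by
  rw [weightedGap, weightedGap, Real.mul_rpow hm.le hx.le, ← mul_sub,
    show 1 - β = 1 + -β by ring, Real.rpow_add hm, Real.rpow_one]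
  ring

lemma sum_weightedGap_iInf_neg {ι : Type*} [Fintype ι] [Nonempty ι] (u : ι → ℝ)
    (hu : ∀ i, 0 < u i) (hsum : ∑ i, u i = 1) (hmin : Fintype.card ι * ⨅ i, u i < 1) {β : ℝ}
    (hβ : Fintype.card ι + 1 ≤ β) :
    ∑ i, weightedGap β (2 * (⨅ i, u i) - Fintype.card ι * (⨅ i, u i) ^ 2) (u i) < 0 := by
  obtain ⟨i₀, hi₀⟩ := exists_eq_ciInf_of_finite (f := u)
  set m := ⨅ i, u i
  have hm : 0 < m := hi₀ ▸ hu i₀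
  have hT : ∑ i, u i / m = 1 / m := by rw [← sum_div, hsum]
  have hv := sum_weightedGap_neg (fun i => u i / m) (fun i => div_pos (hu i) hm) (i₀ := i₀)
    (by simp only [hi₀, div_self hm.ne']) hβ (by rw [hT, lt_div_iff₀ hm]; exact hmin)
  rw [hT, one_div, div_inv_eq_mul] at hv
  have hscale : ∀ i, weightedGap β (2 * m - Fintype.card ι * m ^ 2) (u i) =
      m ^ (1 - β) * weightedGap β (2 - Fintype.card ι * m) (u i / m) := by
    intro i
    rw [← weightedGap_mul hm (div_pos (hu i) hm), mul_div_cancel₀ _ hm.ne']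
    ring_nf
  rw [sum_congr rfl fun i _ => hscale i, ← mul_sum]
  exact mul_neg_of_pos_of_neg (by positivity) hv

lemma card_mul_iInf_lt_one {ι : Type*} [Fintype ι] [Nonempty ι] (u : ι → ℝ)
    (hsum : ∑ i, u i = 1) (hne : u ≠ fun _ => 1 / (Fintype.card ι : ℝ)) :
    Fintype.card ι * ⨅ i, u i < 1 := by
  set m := ⨅ i, u i
  have hle : ∀ i, m ≤ u i := ciInf_le (Set.finite_range u).bddBelow
  by_contra! h
  have hexcess : ∑ i, (u i - m) = 0 := by
    have : ∑ i, (u i - m) ≤ 0 := by simpa [sum_sub_distrib, hsum] using h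
    exact le_antisymm this (sum_nonneg fun i _ => sub_nonneg.2 (hle i))
  have hconst : ∀ i, u i = m := fun i =>
    sub_eq_zero.1 ((sum_eq_zero_iff_of_nonneg fun j _ => sub_nonneg.2 (hle j)).1 hexcess i
      (mem_univ i))
  refine hne (funext fun i => ?_)
  have hcard : (Fintype.card ι : ℝ) * m = 1 := by
    rw [← hsum, sum_congr rfl fun i _ => hconst i, sum_const, card_univ, nsmul_eq_mul]
  rw [hconst, eq_div_iff (by positivity), mul_comm, hcard]

lemma sum_rpow_neg_sub_mul_sum_eq {ι : Type*} (s : Finset ι) (u : ι → ℝ) (hu : ∀ i ∈ s, 0 < u i)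
    (α c : ℝ) :
    ∑ i ∈ s, u i ^ (-α) - c * ∑ i ∈ s, u i ^ (-(1 + α)) =
      ∑ i ∈ s, weightedGap (1 + α) c (u i) := by
  rw [mul_sum, ← sum_sub_distrib]
  refine sum_congr rfl fun i hi => ?_
  rw [weightedGap, show -α = 1 + -(1 + α) by ring, Real.rpow_add (hu i hi), Real.rpow_one]
  ring

/-- Lemma 2: for every `d ≥ 2` there is `α(d) > 0` such that for `α > α(d)`
and `u` in the open simplex,
`2 min u − d (min u)² ≥ (∑ u_i^{−α})/(∑ u_i^{−(1+α)})`, with equality iff `u = U`. -/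
theorem stmt_13 (d : ℕ) (hd : 2 ≤ d) :
    ∃ A : ℝ, 0 < A ∧ ∀ α : ℝ, A < α →
      ∀ u : Fin d → ℝ, (∀ i, 0 < u i) → ∑ i, u i = 1 →
        ((∑ i, u i ^ (-α)) / (∑ i, u i ^ (-(1 + α))) ≤
            2 * (⨅ i, u i) - d * (⨅ i, u i) ^ 2 ∧
          (2 * (⨅ i, u i) - d * (⨅ i, u i) ^ 2 =
              (∑ i, u i ^ (-α)) / (∑ i, u i ^ (-(1 + α))) ↔
            u = fun _ => 1 / (d : ℝ))) := by
  have hd0 : (0 : ℝ) < d := by exact_mod_cast (by omega : 0 < d)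
  refine ⟨d, hd0, fun α hα u hu hsum => ?_⟩
  have : Nonempty (Fin d) := ⟨⟨0, by omega⟩⟩
  set c := 2 * (⨅ i, u i) - d * (⨅ i, u i) ^ 2
  have hden : 0 < ∑ i, u i ^ (-(1 + α)) :=
    sum_pos (fun i _ => Real.rpow_pos_of_pos (hu i) _) univ_nonempty
  have hgap := sum_rpow_neg_sub_mul_sum_eq univ u (fun i _ => hu i) α c
  by_cases huni : u = fun _ => 1 / (d : ℝ)
  · have hzero : ∑ i, weightedGap (1 + α) c (u i) = 0 := by
      have hc : c = 1 / d := by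
        simp only [c, huni, ciInf_const]
        field_simp
        ring
      simp only [hc, huni, weightedGap, sub_self, mul_zero, sum_const_zero]
    have heq : (∑ i, u i ^ (-α)) / (∑ i, u i ^ (-(1 + α))) = c := by
      rw [div_eq_iff hden.ne']; linarith
    exact ⟨heq.le, iff_of_true heq.symm huni⟩
  · have hneg := sum_weightedGap_iInf_neg u hu hsum
      (by simpa using card_mul_iInf_lt_one u hsum (by simpa using huni)) (β := 1 + α)
      (by simp only [Fintype.card_fin]; linarith)
    simp only [Fintype.card_fin] at hneg
    have hlt : (∑ i, u i ^ (-α)) / (∑ i, u i ^ (-(1 + α))) < c := by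
      rw [div_lt_iff₀ hden]; linarith
    exact ⟨hlt.le, iff_of_false hlt.ne' huni⟩
end

section
/- Let d ≥ 2 be an integer and let u, v ∈ ℝ^d satisfy u_i > 0, v_i > 0 for all i and ∑_{i=1}^d u_i = ∑_{i=1}^d v_i = 1. Then ∑_{i=1}^d u_i v_i ≥ min_{1≤i≤d} u_i + min_{1≤j≤d} v_j − d (min_{1≤i≤d} u_i)(min_{1≤j≤d} v_j). -/
open Finset

theorem mul_sum_add_sum_mul_sub_card_mul_le_sum_mul {R ι : Type*} [CommRing R] [LinearOrder R]
    [IsStrictOrderedRing R] (s : Finset ι) {f g : ι → R} {a b : R}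
    (hf : ∀ i ∈ s, a ≤ f i) (hg : ∀ i ∈ s, b ≤ g i) :
    a * ∑ i ∈ s, g i + (∑ i ∈ s, f i) * b - #s * a * b ≤ ∑ i ∈ s, f i * g i := by
  have hprod : 0 ≤ ∑ i ∈ s, (f i - a) * (g i - b) :=
    sum_nonneg fun i hi => mul_nonneg (sub_nonneg.2 (hf i hi)) (sub_nonneg.2 (hg i hi))
  have hexpand : ∑ i ∈ s, (f i - a) * (g i - b) =
      ∑ i ∈ s, f i * g i - (a * ∑ i ∈ s, g i + (∑ i ∈ s, f i) * b - #s * a * b) := by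
    simp only [sub_mul, mul_sub, sum_sub_distrib, mul_sum, sum_mul, sum_const, nsmul_eq_mul]
    ring
  linarith

theorem stmt_14_general (d : ℕ) (u v : Fin d → ℝ)
    (hus : ∑ i, u i = 1) (hvs : ∑ i, v i = 1) :
    (⨅ i, u i) + (⨅ j, v j) - d * (⨅ i, u i) * (⨅ j, v j) ≤ ∑ i, u i * v i := by
  have key := mul_sum_add_sum_mul_sub_card_mul_le_sum_mul univ
    (fun i _ => ciInf_le (Finite.bddBelow_range u) i)
    (fun j _ => ciInf_le (Finite.bddBelow_range v) j)
  simpa only [hus, hvs, mul_one, one_mul, card_univ, Fintype.card_fin] using key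

/-- for `u, v` in the open simplex,
`∑ u_i v_i ≥ min u + min v − d (min u)(min v)`. -/
theorem stmt_14 (d : ℕ) (hd : 2 ≤ d) (u v : Fin d → ℝ)
    (hu : ∀ i, 0 < u i) (hv : ∀ i, 0 < v i)
    (hus : ∑ i, u i = 1) (hvs : ∑ i, v i = 1) :
    (⨅ i, u i) + (⨅ j, v j) - d * (⨅ i, u i) * (⨅ j, v j) ≤ ∑ i, u i * v i :=
  stmt_14_general d u v hus hvs
end

section
/- Let d ≥ 1 be an integer and u ∈ ℝ^d with u_i > 0 for all i. For 0 < α ≤ β, one has (∑_{i=1}^d u_i^{−β})/(∑_{i=1}^d u_i^{−(1+β)}) ≤ (∑_{i=1}^d u_i^{−α})/(∑_{i=1}^d u_i^{−(1+α)}); moreover the inequality is strict whenever α < β and the u_i are not all equal. That is, the function α ↦ (∑_{i=1}^d u_i^{−α})/(∑_{i=1}^d u_i^{−(1+α)}) is nonincreasing in α > 0, and strictly decreasing if u is not a constant vector. -/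
/-!
With weights `w i = u i ^ (-α)`, put `f i = u i ^ (-(β - α))` and `g i = (u i)⁻¹`; then the four
sums are `∑ w f`, `∑ w f g`, `∑ w` and `∑ w g`, and cross-multiplying the claim becomes the
weighted Chebyshev inequality `(∑ w f) (∑ w g) ≤ (∑ w) (∑ w f g)`. It holds because `f` and `g` are
both decreasing functions of `u`, hence similarly ordered, and the gap is
`½ ∑ᵢ ∑ⱼ wᵢ wⱼ (fⱼ - fᵢ)(gⱼ - gᵢ)`, which is positive as soon as `β > α` and two `u i` differ.
-/

open Finset

section WeightedChebyshev

variable {ι R : Type*} (s : Finset ι) (w f g : ι → R)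

theorem two_mul_sum_mul_sum_sub_sum_mul_sum [CommRing R] :
    2 * ((∑ i ∈ s, w i) * (∑ i ∈ s, w i * f i * g i) -
        (∑ i ∈ s, w i * f i) * (∑ i ∈ s, w i * g i)) =
      ∑ i ∈ s, ∑ j ∈ s, w i * w j * ((f j - f i) * (g j - g i)) := by
  set T : ι → ι → R := fun i j ↦ w i * (w j * f j * g j) - w i * f i * (w j * g j)
  have hT : ∑ i ∈ s, ∑ j ∈ s, T i j = (∑ i ∈ s, w i) * (∑ i ∈ s, w i * f i * g i) -
      (∑ i ∈ s, w i * f i) * (∑ i ∈ s, w i * g i) := by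
    simp only [T, sum_mul_sum, sum_sub_distrib]
  calc 2 * ((∑ i ∈ s, w i) * (∑ i ∈ s, w i * f i * g i) -
        (∑ i ∈ s, w i * f i) * (∑ i ∈ s, w i * g i))
      = ∑ i ∈ s, ∑ j ∈ s, T i j + ∑ i ∈ s, ∑ j ∈ s, T j i := by
        rw [sum_comm (f := fun i j ↦ T j i), hT]; ring
    _ = ∑ i ∈ s, ∑ j ∈ s, w i * w j * ((f j - f i) * (g j - g i)) := by
      simp only [← sum_add_distrib, T]
      exact sum_congr rfl fun i _ ↦ sum_congr rfl fun j _ ↦ by ring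

variable [CommRing R] [LinearOrder R] [IsStrictOrderedRing R] {s w f g}

theorem MonovaryOn.sum_mul_sum_le_sum_mul_sum (hfg : MonovaryOn f g s)
    (hw : ∀ i ∈ s, 0 ≤ w i) :
    (∑ i ∈ s, w i * f i) * (∑ i ∈ s, w i * g i) ≤
      (∑ i ∈ s, w i) * (∑ i ∈ s, w i * f i * g i) := by
  have h := two_mul_sum_mul_sum_sub_sum_mul_sum s w f g
  have : 0 ≤ ∑ i ∈ s, ∑ j ∈ s, w i * w j * ((f j - f i) * (g j - g i)) :=
    sum_nonneg fun i hi ↦ sum_nonneg fun j hj ↦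
      mul_nonneg (mul_nonneg (hw i hi) (hw j hj)) (hfg.sub_mul_sub_nonneg hi hj)
  nlinarith

theorem MonovaryOn.sum_mul_sum_lt_sum_mul_sum (hfg : MonovaryOn f g s)
    (hw : ∀ i ∈ s, 0 < w i) {i j : ι} (hi : i ∈ s) (hj : j ∈ s) (hf : f i ≠ f j)
    (hg : g i ≠ g j) :
    (∑ i ∈ s, w i * f i) * (∑ i ∈ s, w i * g i) <
      (∑ i ∈ s, w i) * (∑ i ∈ s, w i * f i * g i) := by
  have h := two_mul_sum_mul_sum_sub_sum_mul_sum s w f g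
  have hterm : ∀ k ∈ s, ∀ l ∈ s, 0 ≤ w k * w l * ((f l - f k) * (g l - g k)) :=
    fun k hk l hl ↦ mul_nonneg (mul_nonneg (hw k hk).le (hw l hl).le)
      (hfg.sub_mul_sub_nonneg hk hl)
  have hij : 0 < w i * w j * ((f j - f i) * (g j - g i)) :=
    mul_pos (mul_pos (hw i hi) (hw j hj)) <|
      (hfg.sub_mul_sub_nonneg hi hj).lt_of_ne' <|
        mul_ne_zero (sub_ne_zero.2 hf.symm) (sub_ne_zero.2 hg.symm)
  have : 0 < ∑ k ∈ s, ∑ l ∈ s, w k * w l * ((f l - f k) * (g l - g k)) :=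
    sum_pos' (fun k hk ↦ sum_nonneg (hterm k hk))
      ⟨i, hi, sum_pos' (hterm i hi) ⟨j, hj, hij⟩⟩
  nlinarith

end WeightedChebyshev

namespace Real

lemma rpow_neg_eq_rpow_neg_mul_rpow_neg_sub {x : ℝ} (hx : 0 < x) (α β : ℝ) :
    x ^ (-β) = x ^ (-α) * x ^ (-(β - α)) := by
  rw [← rpow_add hx]; ring_nf

lemma rpow_neg_one_add {x : ℝ} (hx : 0 < x) (t : ℝ) : x ^ (-(1 + t)) = x ^ (-t) * x⁻¹ := by
  rw [← rpow_neg_one, ← rpow_add hx]; ring_nf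

variable {ι : Type*} {s : Finset ι} {u : ι → ℝ}

lemma monovaryOn_rpow_neg_inv (hu : ∀ i ∈ s, 0 < u i) {γ : ℝ} (hγ : 0 ≤ γ) :
    MonovaryOn (fun i ↦ u i ^ (-γ)) (fun i ↦ (u i)⁻¹) s :=
  ((antitoneOn_rpow_Ioi_of_exponent_nonpos (neg_nonpos.2 hγ)).monovaryOn
    antitoneOn_inv_pos).comp_right u |>.subset hu

theorem sum_rpow_neg_mul_sum_le (hu : ∀ i ∈ s, 0 < u i) {α β : ℝ} (hαβ : α ≤ β) :
    (∑ i ∈ s, u i ^ (-β)) * (∑ i ∈ s, u i ^ (-(1 + α))) ≤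
      (∑ i ∈ s, u i ^ (-α)) * (∑ i ∈ s, u i ^ (-(1 + β))) := by
  rw [sum_congr rfl fun i hi ↦ rpow_neg_one_add (hu i hi) α,
    sum_congr rfl fun i hi ↦ rpow_neg_one_add (hu i hi) β,
    sum_congr rfl fun i hi ↦ rpow_neg_eq_rpow_neg_mul_rpow_neg_sub (hu i hi) α β,
    sum_congr rfl fun i hi ↦
      congrArg (· * (u i)⁻¹) (rpow_neg_eq_rpow_neg_mul_rpow_neg_sub (hu i hi) α β)]
  exact (monovaryOn_rpow_neg_inv hu (sub_nonneg.2 hαβ)).sum_mul_sum_le_sum_mul_sum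
    fun i hi ↦ (rpow_pos_of_pos (hu i hi) _).le

theorem sum_rpow_neg_mul_sum_lt (hu : ∀ i ∈ s, 0 < u i) {α β : ℝ} (hαβ : α < β) {i j : ι}
    (hi : i ∈ s) (hj : j ∈ s) (hij : u i ≠ u j) :
    (∑ i ∈ s, u i ^ (-β)) * (∑ i ∈ s, u i ^ (-(1 + α))) <
      (∑ i ∈ s, u i ^ (-α)) * (∑ i ∈ s, u i ^ (-(1 + β))) := by
  have hexp : -(β - α) < 0 := by linarith
  rw [sum_congr rfl fun i hi ↦ rpow_neg_one_add (hu i hi) α,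
    sum_congr rfl fun i hi ↦ rpow_neg_one_add (hu i hi) β,
    sum_congr rfl fun i hi ↦ rpow_neg_eq_rpow_neg_mul_rpow_neg_sub (hu i hi) α β,
    sum_congr rfl fun i hi ↦
      congrArg (· * (u i)⁻¹) (rpow_neg_eq_rpow_neg_mul_rpow_neg_sub (hu i hi) α β)]
  exact (monovaryOn_rpow_neg_inv hu (sub_nonneg.2 hαβ.le)).sum_mul_sum_lt_sum_mul_sum
    (fun i hi ↦ rpow_pos_of_pos (hu i hi) _) hi hj
    ((strictAntiOn_rpow_Ioi_of_exponent_neg hexp).injOn.ne (hu i hi) (hu j hj) hij)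
    (inv_injective.ne hij)

end Real

theorem stmt_15_general (d : ℕ) (hd : 1 ≤ d) (u : Fin d → ℝ) (hu : ∀ i, 0 < u i)
    (α β : ℝ) (hαβ : α ≤ β) :
    (∑ i, u i ^ (-β)) / (∑ i, u i ^ (-(1 + β))) ≤
      (∑ i, u i ^ (-α)) / (∑ i, u i ^ (-(1 + α))) ∧
    (α < β → (∃ i j, u i ≠ u j) →
      (∑ i, u i ^ (-β)) / (∑ i, u i ^ (-(1 + β))) <
        (∑ i, u i ^ (-α)) / (∑ i, u i ^ (-(1 + α)))) := by
  have hsum_pos (t : ℝ) : 0 < ∑ i, u i ^ t :=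
    sum_pos (fun i _ ↦ Real.rpow_pos_of_pos (hu i) t) (univ_nonempty_iff.2 ⟨⟨0, hd⟩⟩)
  rw [div_le_div_iff₀ (hsum_pos _) (hsum_pos _), div_lt_div_iff₀ (hsum_pos _) (hsum_pos _)]
  exact ⟨Real.sum_rpow_neg_mul_sum_le (fun i _ ↦ hu i) hαβ, fun hlt ⟨i, j, hij⟩ ↦
    Real.sum_rpow_neg_mul_sum_lt (fun i _ ↦ hu i) hlt (mem_univ i) (mem_univ j) hij⟩

/-- for `u ∈ (0,∞)^d`, the function
`α ↦ (∑ u_i^{−α})/(∑ u_i^{−(1+α)})` is nonincreasing in `α > 0`,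
and strictly decreasing if the `u_i` are not all equal. -/
theorem stmt_15 (d : ℕ) (hd : 1 ≤ d) (u : Fin d → ℝ) (hu : ∀ i, 0 < u i)
    (α β : ℝ) (hα : 0 < α) (hαβ : α ≤ β) :
    (∑ i, u i ^ (-β)) / (∑ i, u i ^ (-(1 + β))) ≤
      (∑ i, u i ^ (-α)) / (∑ i, u i ^ (-(1 + α))) ∧
    (α < β → (∃ i j, u i ≠ u j) →
      (∑ i, u i ^ (-β)) / (∑ i, u i ^ (-(1 + β))) <
        (∑ i, u i ^ (-α)) / (∑ i, u i ^ (-(1 + α)))) :=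
  stmt_15_general d hd u hu α β hαβ
end

section
/- Let d ≥ 2 be an integer, α > 0, and w ∈ ℝ^d with w_i > 0 for all i. Then (∑_{i=1}^d w_i^{−α})/(∑_{i=1}^d w_i^{−(1+α)}) < d^{1/(α+1)} · min_{1≤i≤d} w_i. -/
open Finset

/-!
Write `T = ∑ wᵢ^(-α)`, `S = ∑ wᵢ^(-(1+α))` and `m = min wᵢ`. The power-mean inequality between
the exponents `α ≤ α + 1`, applied to the numbers `1 / wᵢ`, gives `T^(α+1) ≤ d · S^α`, hence
`(T / S)^(α+1) ≤ d / S`. Since `d ≥ 2`, `S` strictly exceeds its single term `m^(-(1+α))`, so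
`d / S < d · m^(α+1)`; taking `(α+1)`-th roots gives the claim.
-/

theorem Real.rpow_sum_rpow_le_card_mul_rpow_sum_rpow {ι : Type*} (s : Finset ι) {x : ι → ℝ}
    (hx : ∀ i ∈ s, 0 ≤ x i) {a b : ℝ} (ha : 0 < a) (hab : a ≤ b) :
    (∑ i ∈ s, x i ^ a) ^ b ≤ (#s : ℝ) ^ (b - a) * (∑ i ∈ s, x i ^ b) ^ a := by
  have hpow : ∀ i ∈ s, (x i ^ a) ^ (b / a) = x i ^ b := fun i hi => by
    rw [← Real.rpow_mul (hx i hi), mul_div_cancel₀ b ha.ne']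
  have hmean := Real.rpow_sum_le_const_mul_sum_rpow_of_nonneg (s := s) (f := fun i => x i ^ a)
    ((one_le_div ha).2 hab) fun i hi => Real.rpow_nonneg (hx i hi) a
  rw [sum_congr rfl hpow] at hmean
  have hsum : 0 ≤ ∑ i ∈ s, x i ^ a := sum_nonneg fun i hi => Real.rpow_nonneg (hx i hi) a
  calc (∑ i ∈ s, x i ^ a) ^ b = ((∑ i ∈ s, x i ^ a) ^ (b / a)) ^ a := by
        rw [← Real.rpow_mul hsum, div_mul_cancel₀ b ha.ne']
    _ ≤ ((#s : ℝ) ^ (b / a - 1) * ∑ i ∈ s, x i ^ b) ^ a :=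
        Real.rpow_le_rpow (Real.rpow_nonneg hsum _) hmean ha.le
    _ = (#s : ℝ) ^ (b - a) * (∑ i ∈ s, x i ^ b) ^ a := by
        rw [Real.mul_rpow (by positivity) (sum_nonneg fun i hi => Real.rpow_nonneg (hx i hi) b),
          ← Real.rpow_mul (Nat.cast_nonneg _), sub_mul, div_mul_cancel₀ b ha.ne', one_mul]

theorem Finset.lt_sum_of_pos {ι M : Type*} [Fintype ι] [Nontrivial ι] [AddCommMonoid M]
    [PartialOrder M] [IsOrderedCancelAddMonoid M] {f : ι → M}
    (hf : ∀ i, 0 < f i) (i : ι) : f i < ∑ j, f j := by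
  obtain ⟨j, hji⟩ := exists_ne i
  exact single_lt_sum hji (mem_univ i) (mem_univ j) (hf j) fun k _ _ => (hf k).le

theorem sum_rpow_neg_div_sum_rpow_neg_lt {ι : Type*} [Fintype ι] [Nontrivial ι] {α : ℝ}
    (hα : 0 < α) {w : ι → ℝ} (hw : ∀ i, 0 < w i) :
    (∑ i, w i ^ (-α)) / (∑ i, w i ^ (-(1 + α))) <
      (Fintype.card ι : ℝ) ^ ((1 : ℝ) / (α + 1)) * ⨅ i, w i := by
  set T := ∑ i, w i ^ (-α)
  set S := ∑ i, w i ^ (-(1 + α))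
  obtain ⟨i₀, hi₀⟩ := exists_eq_ciInf_of_finite (f := w)
  set m := ⨅ i, w i
  have hm : 0 < m := hi₀ ▸ hw i₀
  have hα₁ : 0 < α + 1 := by linarith
  have hT : 0 ≤ T := sum_nonneg fun i _ => (Real.rpow_pos_of_pos (hw i) _).le
  have hS : 0 < S := sum_pos (fun i _ => Real.rpow_pos_of_pos (hw i) _) univ_nonempty
  have hcard : (0 : ℝ) < Fintype.card ι := by exact_mod_cast Fintype.card_pos
  have hinv : ∀ i, ∀ y : ℝ, w i ^ (-y) = (w i)⁻¹ ^ y := fun i y => by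
    rw [Real.rpow_neg (hw i).le, Real.inv_rpow (hw i).le]
  have hmean : T ^ (α + 1) ≤ Fintype.card ι * S ^ α := by
    have := Real.rpow_sum_rpow_le_card_mul_rpow_sum_rpow univ
      (fun i _ => (inv_pos.2 (hw i)).le) hα (le_add_of_nonneg_right zero_le_one)
    simp only [T, S, hinv, add_comm 1 α]
    simpa only [add_sub_cancel_left, Real.rpow_one, card_univ] using this
  have hmin : S⁻¹ < m ^ (α + 1) := by
    have := lt_sum_of_pos (fun i => Real.rpow_pos_of_pos (hw i) (-(1 + α))) i₀
    rwa [hi₀, Real.rpow_neg hm.le, inv_lt_comm₀ (by positivity) hS, add_comm] at this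
  rw [← Real.rpow_lt_rpow_iff (div_nonneg hT hS.le) (by positivity) hα₁,
    Real.mul_rpow (by positivity) hm.le, ← Real.rpow_mul hcard.le,
    one_div_mul_cancel hα₁.ne', Real.rpow_one, Real.div_rpow hT hS.le]
  calc T ^ (α + 1) / S ^ (α + 1) ≤ Fintype.card ι * S ^ α / S ^ (α + 1) := by gcongr
    _ = Fintype.card ι * S⁻¹ := by
        rw [Real.rpow_add_one hS.ne', mul_div_assoc, div_mul_cancel_left₀ (by positivity)]
    _ < Fintype.card ι * m ^ (α + 1) := by gcongr

/-- for `d ≥ 2`, `α > 0` and `w ∈ (0,∞)^d`,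
`(∑ w_i^{−α})/(∑ w_i^{−(1+α)}) < d^{1/(α+1)} · min_i w_i`. -/
theorem stmt_16 (d : ℕ) (hd : 2 ≤ d) (α : ℝ) (hα : 0 < α)
    (w : Fin d → ℝ) (hw : ∀ i, 0 < w i) :
    (∑ i, w i ^ (-α)) / (∑ i, w i ^ (-(1 + α))) <
      (d : ℝ) ^ ((1 : ℝ) / (α + 1)) * ⨅ i, w i := by
  have : Nontrivial (Fin d) := Fin.nontrivial_iff_two_le.2 hd
  simpa only [Fintype.card_fin] using sum_rpow_neg_div_sum_rpow_neg_lt hα hw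
end
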